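/- arXiv:2404.09372 — 11 statements merged into one kernel-verified Lean document; each statement's English description precedes it below -/
import Mathlib

section
/- For every integer n ≥ 3, the number of primitive cyclically reduced words of length n over {a, b, a⁻¹, b⁻¹} equals Σ_{d | n} μ(d) · 3^{n/d}, where μ is the Möbius function. -/
abbrev X := Fin 2 × Bool
def inv' (x : X) : X := (x.1, !x.2)

lemma inv_inv' (x : X) : inv' (inv' x) = x := by simp [inv']
lemma inv_ne (x : X) : inv' x ≠ x := by simp [inv', Prod.ext_iff]

/-- triple (a,b,c) of matrix-power entries -/
def abc : ℕ → ℕ × ℕ × ℕ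
  | 0 => (1, 0, 0)
  | n+1 => ((abc n).1 + 2*(abc n).2.2, (abc n).2.1 + 2*(abc n).2.2,
      (abc n).1 + (abc n).2.1 + (abc n).2.2)

def Aent (n : ℕ) (x y : X) : ℕ :=
  if y = x then (abc n).1 else if y = inv' x then (abc n).2.1 else (abc n).2.2

lemma Aent_step (n : ℕ) (x y : X) :
    (∑ z : X, if z ≠ inv' x then Aent n z y else 0) = Aent (n+1) x y := by
  obtain ⟨x1, x2⟩ := x; obtain ⟨y1, y2⟩ := y
  fin_cases x1 <;> fin_cases y1 <;> cases x2 <;> cases y2 <;>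
    simp [Fintype.sum_prod_type, Fin.sum_univ_two, Aent, inv', abc, Prod.ext_iff] <;> ring

open Finset
open Fin.NatCast

def pathSet (n : ℕ) (x y : X) : Finset (Fin (n+1) → X) :=
  univ.filter fun f => f 0 = x ∧ f (Fin.last n) = y ∧
    ∀ i : Fin n, f i.succ ≠ inv' (f i.castSucc)

def W (n : ℕ) (x y : X) : ℕ := (pathSet n x y).card

lemma W_zero (x y : X) : W 0 x y = if y = x then 1 else 0 := by
  classical
  rw [W, pathSet]
  split_ifs with h
  · subst h
    rw [Finset.card_eq_one]
    refine ⟨fun _ => y, ?_⟩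
    ext f
    simp only [mem_filter, mem_univ, true_and, mem_singleton]
    constructor
    · rintro ⟨h0, _, _⟩; funext i; fin_cases i; exact h0
    · rintro rfl; exact ⟨rfl, rfl, fun i => i.elim0⟩
  · rw [Finset.card_eq_zero]
    ext f
    simp only [mem_filter, mem_univ, true_and, Finset.notMem_empty, iff_false, not_and]
    intro h0 hl
    exact absurd (by rw [← hl, ← h0]; rfl) h

lemma cons_mem_pathSet (n : ℕ) (x y : X) (g : Fin (n+1) → X) :
    Fin.cons x g ∈ pathSet (n+1) x y ↔
      (g (Fin.last n) = y ∧ g 0 ≠ inv' x ∧ ∀ i : Fin n, g i.succ ≠ inv' (g i.castSucc)) := by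
  simp only [pathSet, mem_filter, mem_univ, true_and, ← Fin.succ_last,
    Fin.cons_succ, Fin.forall_fin_succ, ← Fin.succ_castSucc, Fin.castSucc_zero,
    Fin.cons_zero]

lemma W_succ (n : ℕ) (x y : X) :
    W (n+1) x y = ∑ z : X, if z ≠ inv' x then W n z y else 0 := by
  classical
  have h1 : pathSet (n+1) x y =
      (univ.filter (fun g : Fin (n+1) → X => g (Fin.last n) = y ∧ g 0 ≠ inv' x ∧
        ∀ i : Fin n, g i.succ ≠ inv' (g i.castSucc))).image (fun g => (Fin.cons x g : Fin (n+2) → X)) := by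
    ext f
    simp only [mem_image, mem_filter, mem_univ, true_and]
    constructor
    · intro hf
      have hx : f 0 = x := by
        simp only [pathSet, mem_filter, mem_univ, true_and] at hf; exact hf.1
      have hfc : Fin.cons x (Fin.tail f) = f := by
        conv_rhs => rw [← Fin.cons_self_tail f]
        rw [hx]
      exact ⟨Fin.tail f, (cons_mem_pathSet n x y _).1 (by rwa [hfc]), hfc⟩
    · rintro ⟨g, hg, rfl⟩
      exact (cons_mem_pathSet n x y g).2 hg
  have hinj : Function.Injective (fun g : Fin (n+1) → X => (Fin.cons x g : Fin (n+2) → X)) := by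
    intro g1 g2 h
    funext i
    have := congrFun h i.succ
    simpa using this
  rw [W, h1, Finset.card_image_of_injective _ hinj]
  rw [Finset.card_eq_sum_card_fiberwise (f := fun g => g 0) (t := univ)
    (fun g _ => mem_univ _)]
  refine Finset.sum_congr rfl fun z _ => ?_
  split_ifs with hz
  · rw [W]
    congr 1
    ext g
    simp only [mem_filter, mem_univ, true_and, pathSet]
    constructor
    · rintro ⟨⟨hl, h0, hc⟩, hz0⟩; exact ⟨hz0, hl, hc⟩
    · rintro ⟨hz0, hl, hc⟩; exact ⟨⟨hl, by rw [hz0]; exact hz, hc⟩, hz0⟩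
  · rw [Finset.card_eq_zero]
    ext g
    simp only [mem_filter, mem_univ, true_and, Finset.notMem_empty, iff_false, not_and]
    push_neg at hz
    rintro ⟨_, h0, _⟩ hz0
    exact h0 (by rw [hz0, hz])

lemma W_eq_Aent (n : ℕ) (x y : X) : W n x y = Aent n x y := by
  induction n generalizing x y with
  | zero =>
    rw [W_zero, Aent]
    rcases eq_or_ne y x with h | h
    · simp [h, abc]
    · rcases eq_or_ne y (inv' x) with h2 | h2 <;> simp [h, h2, abc]
  | succ n ih =>
    rw [W_succ, ← Aent_step]
    exact Finset.sum_congr rfl fun z _ => by split_ifs <;> simp [ih]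

/- Aent_step is the wrong orientation!  Aent_step sums over second index: 
   ∑ z, if z ≠ inv' x then Aent n z y else 0 — check it matches -/

lemma fin_add_nat_val {n : ℕ} [NeZero n] (i : Fin n) (m : ℕ) :
    (i + (m : Fin n)).val = (i.val + m) % n := by
  simp [Fin.add_def, Fin.val_natCast, Nat.add_mod_mod]

lemma fin_add_one_val {n : ℕ} [NeZero n] (i : Fin n) :
    (i + 1).val = (i.val + 1) % n := by
  have h : (1 : Fin n) = ((1 : ℕ) : Fin n) := by simp
  rw [h, fin_add_nat_val]

lemma fin_castSucc_add_one {n : ℕ} (j : Fin n) : (j.castSucc : Fin (n+1)) + 1 = j.succ := by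
  apply Fin.ext
  rw [fin_add_one_val]
  simp only [Fin.coe_castSucc, Fin.val_succ]
  exact Nat.mod_eq_of_lt (by omega)

lemma fin_last_add_one (n : ℕ) : (Fin.last n) + 1 = (0 : Fin (n+1)) := by
  apply Fin.ext
  rw [fin_add_one_val]
  simp [Fin.last]

def cyc (n : ℕ) [NeZero n] : Finset (Fin n → X) :=
  univ.filter fun f => ∀ i, f (i + 1) ≠ inv' (f i)

lemma card_cyc (n : ℕ) : (cyc (n+1)).card = ∑ x : X, W (n+1) x x := by
  classical
  rw [Finset.card_eq_sum_card_fiberwise (f := fun f => f 0) (t := univ)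
    (fun f _ => mem_univ _)]
  refine Finset.sum_congr rfl fun x _ => ?_
  rw [W]
  refine Finset.card_bij'
    (fun f _ => (Fin.snoc f (f 0) : Fin (n+2) → X))
    (fun g _ => g ∘ Fin.castSucc) ?_ ?_ ?_ ?_
  · -- forward membership
    intro f hf
    simp only [mem_filter, mem_univ, true_and, cyc] at hf
    obtain ⟨hred, h0⟩ := hf
    simp only [pathSet, mem_filter, mem_univ, true_and]
    refine ⟨?_, ?_, ?_⟩
    · rw [show (0 : Fin (n+2)) = Fin.castSucc 0 from rfl, Fin.snoc_castSucc]
      exact h0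
    · rw [Fin.snoc_last]; exact h0
    · intro i
      rw [Fin.snoc_castSucc]
      induction i using Fin.lastCases with
      | last =>
        rw [Fin.succ_last, Fin.snoc_last]
        have := hred (Fin.last n)
        rwa [fin_last_add_one] at this
      | cast j =>
        rw [Fin.succ_castSucc, Fin.snoc_castSucc]
        have := hred j.castSucc
        rwa [fin_castSucc_add_one] at this
  · -- backward membership
    intro g hg
    simp only [pathSet, mem_filter, mem_univ, true_and] at hg
    obtain ⟨hg0, hgl, hgc⟩ := hg
    simp only [mem_filter, mem_univ, true_and, cyc]
    constructor
    · intro i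
      show g ((i+1).castSucc) ≠ inv' (g i.castSucc)
      induction i using Fin.lastCases with
      | last =>
        rw [fin_last_add_one]
        rw [show ((0 : Fin (n+1)).castSucc) = (0 : Fin (n+2)) from rfl, hg0, ← hgl]
        rw [← Fin.succ_last]
        exact hgc (Fin.last n)
      | cast j =>
        rw [fin_castSucc_add_one, ← Fin.succ_castSucc]
        exact hgc j.castSucc
    · show g ((0 : Fin (n+1)).castSucc) = x
      rw [show ((0 : Fin (n+1)).castSucc) = (0 : Fin (n+2)) from rfl]
      exact hg0
  · -- left inverse
    intro f hf
    funext i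
    simp only [Function.comp_apply]
    exact Fin.snoc_castSucc _ _ _
  · -- right inverse
    intro g hg
    simp only [pathSet, mem_filter, mem_univ, true_and] at hg
    obtain ⟨hg0, hgl, _⟩ := hg
    funext j
    induction j using Fin.lastCases with
    | last =>
      rw [Fin.snoc_last]
      rw [show (g ∘ Fin.castSucc) 0 = g 0 from rfl, hg0, hgl]
    | cast j =>
      rw [Fin.snoc_castSucc]
      rfl

lemma abc_closed (n : ℕ) :
    (4 * (abc n).1 : ℤ) = 3^n + (-1)^n + 2 ∧
    (4 * (abc n).2.1 : ℤ) = 3^n + (-1)^n - 2 ∧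
    (4 * (abc n).2.2 : ℤ) = 3^n - (-1)^n := by
  induction n with
  | zero => simp [abc]
  | succ n ih =>
    obtain ⟨h1, h2, h3⟩ := ih
    refine ⟨?_, ?_, ?_⟩ <;> simp only [abc] <;> push_cast <;> ring_nf <;>
      ring_nf at h1 h2 h3 <;> linarith

lemma card_cyc_closed (n : ℕ) :
    ((cyc (n+1)).card : ℤ) = 3^(n+1) + (-1)^(n+1) + 2 := by
  rw [card_cyc]
  have h : ∀ x : X, W (n+1) x x = (abc (n+1)).1 := by
    intro x
    rw [W_eq_Aent, Aent]
    simp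
  rw [Finset.sum_congr rfl fun x _ => h x]
  rw [Finset.sum_const]
  have hcard : (Finset.univ : Finset X).card = 4 := by decide
  rw [hcard, smul_eq_mul]
  push_cast
  have := (abc_closed (n+1)).1
  push_cast at this
  linarith

section Periods
attribute [local instance] Classical.propDecidable
variable {n : ℕ} [NeZero n]

def Per (n : ℕ) [NeZero n] (f : Fin n → X) (m : ℕ) : Prop :=
  ∀ i, f (i + (m : Fin n)) = f i

def Per' (f : Fin n → X) (x : Fin n) : Prop := ∀ i, f (i + x) = f i

lemma per'_zero (f : Fin n → X) : Per' f 0 := fun i => by rw [add_zero]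

lemma per'_add {f : Fin n → X} {x y : Fin n} (hx : Per' f x) (hy : Per' f y) :
    Per' f (x + y) := fun i => by rw [← add_assoc, hy, hx]

lemma per'_neg {f : Fin n → X} {x : Fin n} (hx : Per' f x) : Per' f (-x) := by
  intro i
  have := hx (i + -x)
  rw [add_assoc, neg_add_cancel, add_zero] at this
  exact this.symm

lemma per'_zsmul {f : Fin n → X} {x : Fin n} (hx : Per' f x) (k : ℤ) :
    Per' f (k • x) := by
  induction k using Int.induction_on with
  | zero => simpa using per'_zero f
  | succ k ih => rw [add_smul, one_smul]; exact per'_add ih hx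
  | pred k ih => rw [sub_smul, one_smul, sub_eq_add_neg]; exact per'_add ih (per'_neg hx)

lemma per_iff_per' (f : Fin n → X) (m : ℕ) : Per n f m ↔ Per' f (m : Fin n) := Iff.rfl

lemma per_self (f : Fin n → X) : Per n f n := by
  intro i
  rw [Fin.natCast_self, add_zero]

open Fin.CommRing in
lemma per_gcd {f : Fin n → X} {a b : ℕ} (ha : Per n f a) (hb : Per n f b) :
    Per n f (Nat.gcd a b) := by
  rw [per_iff_per'] at *
  have hcast : ((Nat.gcd a b : ℕ) : Fin n) =
      (Nat.gcdA a b) • (a : Fin n) + (Nat.gcdB a b) • (b : Fin n) := by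
    have h := Nat.gcd_eq_gcd_ab a b
    have : (((Nat.gcd a b : ℕ) : ℤ) : Fin n) =
        ((a * Nat.gcdA a b + b * Nat.gcdB a b : ℤ) : Fin n) := by rw [← h]
    push_cast at this
    rw [this]
    rw [zsmul_eq_mul, zsmul_eq_mul]
    ring
  rw [hcast]
  exact per'_add (per'_zsmul ha _) (per'_zsmul hb _)

noncomputable def d0 (f : Fin n → X) : ℕ :=
  Nat.find (p := fun m => 0 < m ∧ Per n f m)
    ⟨n, Nat.pos_of_ne_zero (NeZero.ne n), per_self f⟩

lemma d0_pos (f : Fin n → X) : 0 < d0 f := (Nat.find_spec (p := fun m => 0 < m ∧ Per n f m) _).1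

lemma d0_per (f : Fin n → X) : Per n f (d0 f) := (Nat.find_spec (p := fun m => 0 < m ∧ Per n f m) _).2

lemma d0_le {f : Fin n → X} {m : ℕ} (hm : 0 < m) (h : Per n f m) : d0 f ≤ m :=
  Nat.find_le ⟨hm, h⟩

lemma d0_dvd {f : Fin n → X} {m : ℕ} (hm : 0 < m) (h : Per n f m) : d0 f ∣ m := by
  have hg : Per n f (Nat.gcd (d0 f) m) := per_gcd (d0_per f) h
  have hgpos : 0 < Nat.gcd (d0 f) m := Nat.gcd_pos_of_pos_left _ (d0_pos f)
  have h1 : d0 f ≤ Nat.gcd (d0 f) m := d0_le hgpos hg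
  have h2 : Nat.gcd (d0 f) m ≤ d0 f := Nat.le_of_dvd (d0_pos f) (Nat.gcd_dvd_left _ _)
  have : Nat.gcd (d0 f) m = d0 f := le_antisymm h2 h1
  rw [← this]
  exact Nat.gcd_dvd_right _ _

lemma d0_dvd_self (f : Fin n → X) : d0 f ∣ n :=
  d0_dvd (Nat.pos_of_ne_zero (NeZero.ne n)) (per_self f)

lemma prim_iff (f : Fin n → X) :
    (¬ ∃ d : ℕ, d ∣ n ∧ 1 ≤ d ∧ d < n ∧ Per n f d) ↔ d0 f = n := by
  constructor
  · intro h
    by_contra hne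
    have hlt : d0 f < n :=
      lt_of_le_of_ne (Nat.le_of_dvd (Nat.pos_of_ne_zero (NeZero.ne n)) (d0_dvd_self f)) hne
    exact h ⟨d0 f, d0_dvd_self f, d0_pos f, hlt, d0_per f⟩
  · rintro hd ⟨d, hdvd, h1, hlt, hper⟩
    have := d0_le h1 hper
    omega

end Periods

section Phi
attribute [local instance] Classical.propDecidable
variable {n d : ℕ} [NeZero n] [NeZero d] (hd : d ∣ n)

def Φ (n : ℕ) [NeZero n] [NeZero d] (g : Fin d → X) : Fin n → X :=
  fun i => g ⟨i.val % d, Nat.mod_lt _ (Nat.pos_of_ne_zero (NeZero.ne d))⟩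

def restr (d : ℕ) [NeZero n] [NeZero d] (hd : d ∣ n) (f : Fin n → X) : Fin d → X :=
  fun j => f ⟨j.val, lt_of_lt_of_le j.isLt
    (Nat.le_of_dvd (Nat.pos_of_ne_zero (NeZero.ne n)) hd)⟩

include hd in
lemma phi_add_nat (g : Fin d → X) (i : Fin n) (m : ℕ) :
    Φ n g (i + (m : Fin n)) =
      g ((⟨i.val % d, Nat.mod_lt _ (Nat.pos_of_ne_zero (NeZero.ne d))⟩ : Fin d) + (m : Fin d)) := by
  unfold Φ
  congr 1
  apply Fin.ext
  simp only [fin_add_nat_val]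
  rw [Nat.mod_mod_of_dvd _ hd, Nat.mod_add_mod]

include hd in
lemma phi_add_one (g : Fin d → X) (i : Fin n) :
    Φ n g (i + 1) =
      g ((⟨i.val % d, Nat.mod_lt _ (Nat.pos_of_ne_zero (NeZero.ne d))⟩ : Fin d) + 1) := by
  have h1 : (1 : Fin n) = ((1:ℕ) : Fin n) := by simp
  have h2 : (1 : Fin d) = ((1:ℕ) : Fin d) := by simp
  rw [h1, h2, phi_add_nat hd]

lemma phi_apply_mk (g : Fin d → X) (j : Fin d) :
    Φ n g ⟨j.val, lt_of_lt_of_le j.isLt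
      (Nat.le_of_dvd (Nat.pos_of_ne_zero (NeZero.ne n)) hd)⟩ = g j := by
  unfold Φ
  congr 1
  apply Fin.ext
  exact Nat.mod_eq_of_lt j.isLt

include hd in
lemma red_iff (g : Fin d → X) :
    (∀ i : Fin n, Φ n g (i + 1) ≠ inv' (Φ n g i)) ↔ (∀ j : Fin d, g (j + 1) ≠ inv' (g j)) := by
  constructor
  · intro h j
    have := h ⟨j.val, lt_of_lt_of_le j.isLt
      (Nat.le_of_dvd (Nat.pos_of_ne_zero (NeZero.ne n)) hd)⟩
    rwa [phi_add_one hd, phi_apply_mk hd,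
      show (⟨(⟨j.val, _⟩ : Fin n).val % d, _⟩ : Fin d) = j from Fin.ext (Nat.mod_eq_of_lt j.isLt)]
      at this
  · intro h i
    rw [phi_add_one hd]
    unfold Φ
    exact h _

include hd in
lemma per_iff (g : Fin d → X) (m : ℕ) : Per n (Φ n g) m ↔ Per d g m := by
  constructor
  · intro h j
    have := h ⟨j.val, lt_of_lt_of_le j.isLt
      (Nat.le_of_dvd (Nat.pos_of_ne_zero (NeZero.ne n)) hd)⟩
    rwa [phi_add_nat hd, phi_apply_mk hd,
      show (⟨(⟨j.val, _⟩ : Fin n).val % d, _⟩ : Fin d) = j from Fin.ext (Nat.mod_eq_of_lt j.isLt)]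
      at this
  · intro h i
    rw [phi_add_nat hd]
    unfold Φ
    exact h _

lemma per_add {f : Fin n → X} {a b : ℕ} (ha : Per n f a) (hb : Per n f b) :
    Per n f (a + b) := by
  rw [per_iff_per'] at *
  push_cast
  exact per'_add ha hb

lemma per_mul {f : Fin n → X} {a : ℕ} (ha : Per n f a) (q : ℕ) : Per n f (a * q) := by
  induction q with
  | zero => intro i; simp
  | succ q ih =>
    have := per_add ih ha
    rwa [show a * q + a = a * (q+1) by ring] at this

include hd in
lemma phi_restr {f : Fin n → X} (hper : Per n f d) : Φ n (restr d hd f) = f := by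
  funext i
  have hdpos : 0 < d := Nat.pos_of_ne_zero (NeZero.ne d)
  set j : Fin n := ⟨i.val % d, lt_of_lt_of_le (Nat.mod_lt _ hdpos)
    (Nat.le_of_dvd (Nat.pos_of_ne_zero (NeZero.ne n)) hd)⟩ with hj
  have hkey : j + ((d * (i.val / d) : ℕ) : Fin n) = i := by
    apply Fin.ext
    rw [fin_add_nat_val]
    show (i.val % d + d * (i.val / d)) % n = i.val
    rw [Nat.mod_add_div, Nat.mod_eq_of_lt i.isLt]
  have h2 := per_mul hper (i.val / d) j
  rw [hkey] at h2
  exact h2.symm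

lemma restr_phi (g : Fin d → X) : restr d hd (Φ n g) = g := by
  funext j
  unfold restr
  exact phi_apply_mk hd g j

lemma d0_eq_of_per_iff {f : Fin n → X} {g : Fin d → X}
    (h : ∀ m, Per n f m ↔ Per d g m) : d0 f = d0 g := by
  apply le_antisymm
  · exact Nat.find_le ⟨d0_pos g, (h _).2 (d0_per g)⟩
  · exact Nat.find_le ⟨d0_pos f, (h _).1 (d0_per f)⟩

end Phi

section Count
attribute [local instance] Classical.propDecidable

noncomputable def primCount (d : ℕ) : ℕ :=
  if h : d = 0 then 0 else
    haveI : NeZero d := ⟨h⟩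
    (univ.filter fun f : Fin d → X => (∀ i, f (i+1) ≠ inv' (f i)) ∧ d0 f = d).card

lemma primCount_eq (d : ℕ) [NeZero d] :
    primCount d =
      (univ.filter fun f : Fin d → X => (∀ i, f (i+1) ≠ inv' (f i)) ∧ d0 f = d).card := by
  rw [primCount, dif_neg (NeZero.ne d)]

lemma fiber_card (n d : ℕ) [NeZero n] [NeZero d] (hd : d ∣ n) :
    (univ.filter fun f : Fin n → X => (∀ i, f (i+1) ≠ inv' (f i)) ∧ d0 f = d).card =
    primCount d := by
  rw [primCount_eq]
  refine Finset.card_bij' (fun f _ => restr d hd f) (fun g _ => Φ n g) ?_ ?_ ?_ ?_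
  · intro f hf
    simp only [mem_filter, mem_univ, true_and] at hf ⊢
    obtain ⟨hred, hd0⟩ := hf
    have hper : Per n f d := by rw [← hd0]; exact d0_per f
    have hphi : Φ n (restr d hd f) = f := phi_restr hd hper
    constructor
    · rw [← red_iff hd (restr d hd f), hphi]; exact hred
    · have := d0_eq_of_per_iff (f := f) (g := restr d hd f)
        (fun m => by rw [← per_iff hd (restr d hd f) m, hphi])
      omega
  · intro g hg
    simp only [mem_filter, mem_univ, true_and] at hg ⊢
    obtain ⟨hred, hd0⟩ := hg
    constructor
    · exact (red_iff hd g).2 hred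
    · have := d0_eq_of_per_iff (f := Φ n g) (g := g) (per_iff hd g)
      omega
  · intro f hf
    simp only [mem_filter, mem_univ, true_and] at hf
    exact phi_restr hd (by rw [← hf.2]; exact d0_per f)
  · intro g _
    exact restr_phi hd g

lemma sum_primCount (n : ℕ) [NeZero n] :
    ∑ d ∈ n.divisors, primCount d = (cyc n).card := by
  rw [Finset.card_eq_sum_card_fiberwise (f := fun f => d0 f) (t := n.divisors) ?hmem]
  case hmem =>
    intro f _
    rw [Finset.mem_coe, Nat.mem_divisors]
    exact ⟨d0_dvd_self f, NeZero.ne n⟩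
  refine (Finset.sum_congr rfl fun d hd => ?_).symm
  rw [Nat.mem_divisors] at hd
  haveI : NeZero d := ⟨by
    rintro rfl
    exact hd.2 (Nat.eq_zero_of_zero_dvd hd.1)⟩
  rw [cyc, Finset.filter_filter]
  exact fiber_card n d hd.1

open ArithmeticFunction

lemma sum_primCount_int (n : ℕ) (hn : 0 < n) :
    ∑ d ∈ n.divisors, (primCount d : ℤ) = 3^n + (-1)^n + 2 := by
  obtain ⟨m, rfl⟩ : ∃ m, n = m + 1 := ⟨n - 1, by omega⟩
  have h1 : ∑ d ∈ (m+1).divisors, (primCount d : ℤ) =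
      ((∑ d ∈ (m+1).divisors, primCount d : ℕ) : ℤ) := by push_cast; rfl
  rw [h1, sum_primCount (m+1), card_cyc_closed m]

lemma moebius_inversion (n : ℕ) (hn : 0 < n) :
    (primCount n : ℤ) = ∑ d ∈ n.divisors, (moebius d : ℤ) * (3^(n/d) + (-1)^(n/d) + 2) := by
  have h := (sum_eq_iff_sum_smul_moebius_eq
    (f := fun k => (primCount k : ℤ))
    (g := fun k => 3^k + (-1)^k + 2)).mp (fun k hk => sum_primCount_int k hk) n hn
  rw [← h, Nat.sum_divisorsAntidiagonal (fun a b => (moebius a : ℤ) • ((3:ℤ)^b + (-1)^b + 2))]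
  refine Finset.sum_congr rfl fun x _ => ?_
  rw [smul_eq_mul]

lemma sum_mu (n : ℕ) (h : n ≠ 1) : ∑ d ∈ n.divisors, (moebius d : ℤ) = 0 := by
  have h2 := congrArg (fun f : ArithmeticFunction ℤ => f n) moebius_mul_coe_zeta
  simp only [coe_mul_zeta_apply] at h2
  rw [h2]
  simp [one_apply, h]

lemma sum_mu_odd (n : ℕ) (hn : 3 ≤ n) :
    ∑ d ∈ (n.divisors.filter fun d => Odd (n / d)), (moebius d : ℤ) = 0 := by
  have hn0 : n ≠ 0 := by omega
  set k := n.factorization 2 with hk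
  set m := n / 2^k with hm
  have hpk : 2^k ∣ n := Nat.ordProj_dvd n 2
  have hnm : n = 2^k * m := (Nat.ordProj_mul_ordCompl_eq_self n 2).symm
  have hm0 : m ≠ 0 := (Nat.ordCompl_pos 2 hn0).ne'
  have hmodd : ¬ 2 ∣ m := Nat.not_dvd_ordCompl Nat.prime_two hn0
  have h2kpos : 0 < 2^k := Nat.pow_pos (by omega)
  have hkey : ∀ d, d ∣ n → Odd (n / d) → 2^k ∣ d := by
    intro d hdvd hodd
    have hd0 : d ≠ 0 := by rintro rfl; exact hn0 (Nat.eq_zero_of_zero_dvd hdvd)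
    have hnd0 : n / d ≠ 0 := Nat.div_ne_zero_iff.mpr ⟨hd0, Nat.le_of_dvd (by omega) hdvd⟩
    have hfact : d.factorization 2 = k := by
      have hmul : n = d * (n / d) := (Nat.mul_div_cancel' hdvd).symm
      have h1 : n.factorization 2 = d.factorization 2 + (n/d).factorization 2 := by
        conv_lhs => rw [hmul]
        rw [Nat.factorization_mul hd0 hnd0]
        rfl
      have h2 : (n/d).factorization 2 = 0 :=
        Nat.factorization_eq_zero_of_not_dvd (by
          rw [Nat.odd_iff] at hodd; omega)
      omega
    rw [← hfact]
    exact Nat.ordProj_dvd d 2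
  have hstep : ∑ d ∈ (n.divisors.filter fun d => Odd (n / d)), (moebius d : ℤ) =
      ∑ e ∈ m.divisors, (moebius (2^k * e) : ℤ) := by
    refine Finset.sum_nbij' (i := fun d => d / 2^k) (j := fun e => 2^k * e)
      ?_ ?_ ?_ ?_ ?_
    · intro d hd
      simp only [Finset.mem_filter, Nat.mem_divisors] at hd
      obtain ⟨⟨hdvd, _⟩, hodd⟩ := hd
      have h2k : 2^k ∣ d := hkey d hdvd hodd
      rw [Nat.mem_divisors]
      refine ⟨?_, hm0⟩
      have : 2^k * (d / 2^k) ∣ 2^k * m := by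
        rw [Nat.mul_div_cancel' h2k, ← hnm]; exact hdvd
      exact (mul_dvd_mul_iff_left h2kpos.ne').mp this
    · intro e he
      rw [Nat.mem_divisors] at he
      obtain ⟨hedvd, _⟩ := he
      simp only [Finset.mem_filter, Nat.mem_divisors]
      refine ⟨⟨?_, hn0⟩, ?_⟩
      · rw [hnm]; exact mul_dvd_mul_left _ hedvd
      · have hquot : n / (2^k * e) = m / e := by
          rw [hnm, Nat.mul_div_mul_left _ _ h2kpos]
        rw [hquot]
        have hdvd2 : m / e ∣ m := Nat.div_dvd_of_dvd hedvd
        rcases Nat.even_or_odd (m / e) with h | h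
        · exact absurd (dvd_trans h.two_dvd hdvd2) hmodd
        · exact h
    · intro d hd
      simp only [Finset.mem_filter, Nat.mem_divisors] at hd
      exact Nat.mul_div_cancel' (hkey d hd.1.1 hd.2)
    · intro e _
      exact Nat.mul_div_cancel_left _ h2kpos
    · intro d hd
      simp only [Finset.mem_filter, Nat.mem_divisors] at hd
      rw [Nat.mul_div_cancel' (hkey d hd.1.1 hd.2)]
  rw [hstep]
  have hcop : ∀ e, e ∣ m → Nat.Coprime (2^k) e := by
    intro e he
    refine Nat.Coprime.pow_left _ ?_
    rw [Nat.Prime.coprime_iff_not_dvd Nat.prime_two]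
    intro h2e
    exact hmodd (dvd_trans h2e he)
  have hval : ∀ e ∈ m.divisors, (moebius (2^k * e) : ℤ) = moebius (2^k) * moebius e := by
    intro e he
    rw [Nat.mem_divisors] at he
    exact isMultiplicative_moebius.map_mul_of_coprime (hcop e he.1)
  rw [Finset.sum_congr rfl hval, ← Finset.mul_sum]
  rcases eq_or_ne m 1 with hm1 | hm1
  · have hk2 : 2 ≤ k := by
      by_contra hk2
      interval_cases k <;> omega
    have : moebius (2^k) = 0 := by
      rw [moebius_apply_prime_pow Nat.prime_two (by omega)]
      simp [show k ≠ 1 by omega]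
    rw [this]
    ring
  · rw [sum_mu m hm1]
    ring

lemma sum_mu_neg (n : ℕ) (hn : 3 ≤ n) :
    ∑ d ∈ n.divisors, (moebius d : ℤ) * (-1)^(n/d) = 0 := by
  have key : ∀ d ∈ n.divisors, (moebius d : ℤ) * (-1)^(n/d) =
      (moebius d : ℤ) - 2 * (if Odd (n/d) then (moebius d : ℤ) else 0) := by
    intro d hd
    rcases Nat.even_or_odd (n/d) with h | h
    · rw [Even.neg_one_pow h, if_neg (by simpa [Nat.odd_iff, Nat.even_iff] using h)]
      ring
    · rw [Odd.neg_one_pow h, if_pos h]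
      ring
  rw [Finset.sum_congr rfl key, Finset.sum_sub_distrib, sum_mu n (by omega)]
  rw [← Finset.mul_sum, ← Finset.sum_filter]
  rw [sum_mu_odd n hn]
  ring

end Count

/-- For `n ≥ 3`, the number of primitive cyclically reduced words of length `n` over
`{a, b, a⁻¹, b⁻¹}` (encoded as `Fin 2 × Bool` with inverse `(g,s) ↦ (g,!s)`) equals
`∑_{d ∣ n} μ(d) 3^{n/d}`.  A word is primitive iff it is not fixed by a nontrivial
cyclic shift whose size divides `n`, i.e. it is not a concatenation of `k ≥ 2` copies
of a shorter word. -/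
theorem stmt1 (n : ℕ) [NeZero n] (hn : 3 ≤ n) :
    ({f : Fin n → Fin 2 × Bool |
        (∀ i : Fin n, f (i + 1) ≠ ((f i).1, !(f i).2)) ∧
        ¬ ∃ d : ℕ, d ∣ n ∧ 1 ≤ d ∧ d < n ∧
            ∀ i : Fin n, f (i + (Fin.ofNat n d)) = f i}.ncard : ℤ)
      = ∑ d ∈ n.divisors, ArithmeticFunction.moebius d * 3 ^ (n / d) := by
  classical
  have h3 : 0 < n := by omega
  have hne1 : n ≠ 1 := by omega
  have hset : {f : Fin n → Fin 2 × Bool |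
        (∀ i : Fin n, f (i + 1) ≠ ((f i).1, !(f i).2)) ∧
        ¬ ∃ d : ℕ, d ∣ n ∧ 1 ≤ d ∧ d < n ∧
            ∀ i : Fin n, f (i + (Fin.ofNat n d)) = f i} =
      ↑(Finset.univ.filter fun f : Fin n → X =>
        (∀ i, f (i+1) ≠ inv' (f i)) ∧ d0 f = n) := by
    ext f
    simp only [Set.mem_setOf_eq, Finset.coe_filter, Finset.mem_univ, true_and,
      Set.mem_setOf_eq]
    exact and_congr Iff.rfl (prim_iff f)
  rw [hset, Set.ncard_coe_finset]
  have hpc : (Finset.univ.filter fun f : Fin n → X =>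
      (∀ i, f (i+1) ≠ inv' (f i)) ∧ d0 f = n).card = primCount n := (primCount_eq n).symm
  rw [hpc, moebius_inversion n h3]
  have expand : ∀ d ∈ n.divisors,
      (ArithmeticFunction.moebius d : ℤ) * (3^(n/d) + (-1)^(n/d) + 2) =
      (ArithmeticFunction.moebius d : ℤ) * 3^(n/d)
        + (ArithmeticFunction.moebius d : ℤ) * (-1)^(n/d)
        + 2 * (ArithmeticFunction.moebius d : ℤ) := fun d _ => by ring
  rw [Finset.sum_congr rfl expand, Finset.sum_add_distrib, Finset.sum_add_distrib,
    sum_mu_neg n hn, ← Finset.mul_sum, sum_mu n hne1]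
  ring
end

section
/- Let L ≥ 1 be an integer. The number of triples (x, y, m) with x, m ∈ ℤ_{≥1}, y ∈ ℤ_{≥0}, satisfying x(m+1) + y(m+2) = L, equals L/2 if L is even and (L-1)/2 if L is odd. -/
/-- For `L ≥ 1`, the number of triples `(x, y, m)` with `x, m ≥ 1`, `y ≥ 0` and
`x(m+1) + y(m+2) = L` equals `L/2` if `L` is even and `(L-1)/2` if `L` is odd. -/
theorem stmt4 (L : ℕ) (hL : 1 ≤ L) :
    {p : ℕ × ℕ × ℕ | 1 ≤ p.1 ∧ 1 ≤ p.2.2 ∧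
        p.1 * (p.2.2 + 1) + p.2.1 * (p.2.2 + 2) = L}.ncard
      = if Even L then L / 2 else (L - 1) / 2 := by
  set g : ℕ → ℕ × ℕ × ℕ := fun q => (q - L % q, L % q, L / q - 1) with hg
  have key : {p : ℕ × ℕ × ℕ | 1 ≤ p.1 ∧ 1 ≤ p.2.2 ∧
        p.1 * (p.2.2 + 1) + p.2.1 * (p.2.2 + 2) = L} = g '' (Set.Icc 1 (L / 2)) := by
    ext ⟨x, y, m⟩
    simp only [Set.mem_setOf_eq, Set.mem_image, Set.mem_Icc, hg, Prod.mk.injEq]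
    constructor
    · rintro ⟨hx, hm, heq⟩
      refine ⟨x + y, ⟨by omega, ?_⟩, ?_, ?_, ?_⟩
      · have h2 : 2 * (x + y) ≤ L := by nlinarith
        omega
      all_goals {
        have hq : 0 < x + y := by omega
        have hL' : L = y + (x + y) * (m + 1) := by nlinarith
        have hdiv : L / (x + y) = m + 1 := by
          rw [hL', Nat.add_mul_div_left _ _ hq, Nat.div_eq_of_lt (by omega)]; omega
        have hmod : L % (x + y) = y := by
          rw [hL', Nat.add_mul_mod_self_left, Nat.mod_eq_of_lt (by omega)]
        simp only [hdiv, hmod] <;> omega }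
    · rintro ⟨q, ⟨hq1, hq2⟩, hx, hy, hm⟩
      have hq : 0 < q := hq1
      have hr : L % q < q := Nat.mod_lt _ hq
      have hd : 2 ≤ L / q := by
        rw [Nat.le_div_iff_mul_le hq]; omega
      have hdm : q * (L / q) + L % q = L := Nat.div_add_mod L q
      refine ⟨by omega, by omega, ?_⟩
      subst hx hy hm
      have h1 : L / q - 1 + 1 = L / q := by omega
      have h2 : L / q - 1 + 2 = L / q + 1 := by omega
      rw [h1, h2]
      have h3 : q = (q - L % q) + L % q := by omega
      calc (q - L % q) * (L / q) + L % q * (L / q + 1)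
          = ((q - L % q) + L % q) * (L / q) + L % q := by ring
        _ = q * (L / q) + L % q := by rw [← h3]
        _ = L := hdm
  rw [key]
  have hinj : Set.InjOn g (Set.Icc 1 (L / 2)) := by
    rintro a ⟨ha, _⟩ b ⟨hb, _⟩ hab
    simp only [hg, Prod.mk.injEq] at hab
    have h1 : L % a < a := Nat.mod_lt _ ha
    have h2 : L % b < b := Nat.mod_lt _ hb
    omega
  rw [Set.ncard_image_of_injOn hinj, ← Finset.coe_Icc, Set.ncard_coe_finset, Nat.card_Icc]
  rcases Nat.even_or_odd L with h | h
  · rw [if_pos h]; omega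
  · rw [if_neg (Nat.not_even_iff_odd.mpr h)]
    obtain ⟨k, hk⟩ := h
    omega
end

section
/- Let L ≥ 1 be an integer and let S_1(L) be the set of triples (x, y, m) of positive integers with gcd(x, y) = 1 and x(m+1) + y(m+2) = L. Then |S_1(L)| = ⌈φ(L)/2⌉ - 1, where φ is Euler's totient function. -/
open Finset

private lemma halfcount (L : ℕ) (hL : 3 ≤ L) :
    2 * ((Finset.Ico 1 (L/2+1)).filter (fun s => Nat.Coprime s L)).card = Nat.totient L := by
  have h1 : Nat.totient L = ((Finset.Ico 1 L).filter (fun s => Nat.Coprime s L)).card := by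
    rw [Nat.totient_eq_card_coprime]
    congr 1
    ext s
    simp only [Finset.mem_filter, Finset.mem_range, Finset.mem_Ico]
    constructor
    · rintro ⟨hs, hc⟩
      have hc' : Nat.Coprime s L := hc.symm
      have : s ≠ 0 := by
        rintro rfl
        simp [Nat.coprime_zero_left] at hc'
        omega
      exact ⟨⟨by omega, hs⟩, hc'⟩
    · rintro ⟨⟨h1, h2⟩, hc⟩
      exact ⟨h2, hc.symm⟩
  have hsplit : Finset.Ico 1 L = Finset.Ico 1 (L/2+1) ∪ Finset.Ico (L/2+1) L := by
    rw [Finset.Ico_union_Ico_eq_Ico] <;> omega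
  have hdisj : Disjoint ((Finset.Ico 1 (L/2+1)).filter (fun s => Nat.Coprime s L))
      ((Finset.Ico (L/2+1) L).filter (fun s => Nat.Coprime s L)) := by
    apply Finset.disjoint_filter_filter
    exact Finset.Ico_disjoint_Ico_consecutive 1 (L/2+1) L
  have hkey : ∀ s, Nat.Coprime s L → 2 * s ≠ L := by
    intro s hc h2s
    have hdvd : s ∣ L := ⟨2, by omega⟩
    have hg : Nat.gcd s L = s := Nat.gcd_eq_left hdvd
    have : s = 1 := by rw [Nat.Coprime] at hc; omega
    omega
  have hbij : ((Finset.Ico (L/2+1) L).filter (fun s => Nat.Coprime s L)).card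
      = ((Finset.Ico 1 (L/2+1)).filter (fun s => Nat.Coprime s L)).card := by
    apply Finset.card_bij' (fun s _ => L - s) (fun s _ => L - s)
    · intro s hs
      simp only [Finset.mem_filter, Finset.mem_Ico] at hs ⊢
      obtain ⟨⟨ha, hb⟩, hc⟩ := hs
      refine ⟨⟨by omega, by omega⟩, ?_⟩
      exact (Nat.coprime_self_sub_left (by omega)).mpr hc
    · intro s hs
      simp only [Finset.mem_filter, Finset.mem_Ico] at hs ⊢
      obtain ⟨⟨ha, hb⟩, hc⟩ := hs
      have h2s := hkey s hc
      refine ⟨⟨by omega, by omega⟩, ?_⟩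
      exact (Nat.coprime_self_sub_left (by omega)).mpr hc
    · intro s hs
      simp only [Finset.mem_filter, Finset.mem_Ico] at hs
      omega
    · intro s hs
      simp only [Finset.mem_filter, Finset.mem_Ico] at hs
      omega
  rw [h1, hsplit, Finset.filter_union, Finset.card_union_of_disjoint hdisj, hbij]
  ring

private lemma cardT (L : ℕ) (hL : 1 ≤ L) :
    ((Finset.Ico 2 (L/2+1)).filter (fun s => Nat.Coprime s L)).card
      = (Nat.totient L + 1) / 2 - 1 := by
  rcases lt_or_ge L 3 with h3 | h3
  · interval_cases L <;> decide
  · have heven := Nat.totient_even (show 2 < L by omega)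
    have hone : (1 : ℕ) ∈ (Finset.Ico 1 (L/2+1)).filter (fun s => Nat.Coprime s L) := by
      simp only [Finset.mem_filter, Finset.mem_Ico]
      exact ⟨⟨le_refl 1, by omega⟩, Nat.coprime_one_left L⟩
    have herase : (Finset.Ico 2 (L/2+1)).filter (fun s => Nat.Coprime s L)
        = ((Finset.Ico 1 (L/2+1)).filter (fun s => Nat.Coprime s L)).erase 1 := by
      ext s
      simp only [Finset.mem_filter, Finset.mem_Ico, Finset.mem_erase]
      constructor
      · rintro ⟨⟨ha, hb⟩, hc⟩
        exact ⟨by omega, ⟨by omega, hb⟩, hc⟩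
      · rintro ⟨hne, ⟨ha, hb⟩, hc⟩
        exact ⟨⟨by omega, hb⟩, hc⟩
    have hcard := Finset.card_erase_of_mem hone
    have hhalf := halfcount L h3
    obtain ⟨k, hk⟩ := heven
    rw [herase, hcard]
    omega

/-- For `L ≥ 1`, the number of triples `(x, y, m)` of positive integers with
`gcd(x, y) = 1` and `x(m+1) + y(m+2) = L` equals `⌈φ(L)/2⌉ - 1`. -/
theorem stmt5 (L : ℕ) (hL : 1 ≤ L) :
    {p : ℕ × ℕ × ℕ | 1 ≤ p.1 ∧ 1 ≤ p.2.1 ∧ 1 ≤ p.2.2 ∧ Nat.gcd p.1 p.2.1 = 1 ∧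
        p.1 * (p.2.2 + 1) + p.2.1 * (p.2.2 + 2) = L}.ncard
      = (Nat.totient L + 1) / 2 - 1 := by
  classical
  set T : Finset ℕ := (Finset.Ico 2 (L/2+1)).filter (fun s => Nat.Coprime s L) with hT
  set f : ℕ → ℕ × ℕ × ℕ := fun s => (s - L % s, L % s, L / s - 1) with hf
  have hset : {p : ℕ × ℕ × ℕ | 1 ≤ p.1 ∧ 1 ≤ p.2.1 ∧ 1 ≤ p.2.2 ∧ Nat.gcd p.1 p.2.1 = 1 ∧
        p.1 * (p.2.2 + 1) + p.2.1 * (p.2.2 + 2) = L} = ↑(T.image f) := by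
    ext p
    obtain ⟨x, y, m⟩ := p
    simp only [Set.mem_setOf_eq, Finset.coe_image, Set.mem_image, Finset.mem_coe,
      Finset.mem_filter, Finset.mem_Ico, hT, hf]
    constructor
    · rintro ⟨hx, hy, hm, hg, he⟩
      have hL' : (x + y) * (m + 1) + y = L := by rw [← he]; ring
      set s := x + y with hs
      have hmod : L % s = y := by
        rw [← hL']
        rw [show s * (m+1) + y = y + s * (m+1) by ring]
        rw [Nat.add_mul_mod_self_left]
        exact Nat.mod_eq_of_lt (by omega)
      have hdiv : L / s = m + 1 := by
        rw [← hL']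
        rw [show s * (m+1) + y = y + s * (m+1) by ring]
        rw [Nat.add_mul_div_left _ _ (by omega : 0 < s)]
        rw [Nat.div_eq_of_lt (by omega)]
        omega
      have hcop : Nat.Coprime s L := by
        have h1 : Nat.gcd s y = 1 := by
          rw [hs, Nat.gcd_comm, Nat.gcd_add_self_right, Nat.gcd_comm]
          exact hg
        have : Nat.Coprime s (y + s * (m+1)) := by
          rw [Nat.Coprime]
          rw [Nat.gcd_add_mul_left_right]
          exact h1
        rw [← hL', show s * (m+1) + y = y + s * (m+1) by ring]
        exact this
      have hsm : s * 2 ≤ s * (m + 1) := Nat.mul_le_mul_left s (by omega)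
      refine ⟨s, ⟨⟨by omega, ?_⟩, hcop⟩, ?_⟩
      · omega
      · rw [hmod, hdiv]
        refine Prod.ext (by omega) (Prod.ext rfl ?_)
        show m + 1 - 1 = m
        omega
    · rintro ⟨s, ⟨⟨h2, hs2⟩, hcop⟩, heq⟩
      have hs0 : 0 < s := by omega
      have hylt : L % s < s := Nat.mod_lt _ hs0
      have hy1 : 1 ≤ L % s := by
        rcases Nat.eq_zero_or_pos (L % s) with h0 | h0
        · exfalso
          have hdvd : s ∣ L := Nat.dvd_of_mod_eq_zero h0
          have hg : Nat.gcd s L = s := Nat.gcd_eq_left hdvd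
          rw [Nat.Coprime] at hcop
          omega
        · exact h0
      have h2s : 2 * s ≤ L := by omega
      have hdiv2 : 2 ≤ L / s := by
        rw [Nat.le_div_iff_mul_le hs0]; omega
      have hgcd : Nat.gcd (s - L % s) (L % s) = 1 := by
        rw [Nat.gcd_comm, Nat.gcd_sub_self_right (le_of_lt hylt), Nat.gcd_comm]
        have : Nat.gcd s L = Nat.gcd (L % s) s := Nat.gcd_rec s L
        rw [Nat.Coprime] at hcop
        rw [Nat.gcd_comm]
        omega
      have hmd : s * (L / s) + L % s = L := Nat.div_add_mod L s
      obtain ⟨hx', hy', hm'⟩ : x = s - L % s ∧ y = L % s ∧ m = L / s - 1 := by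
        simpa [Prod.ext_iff] using heq.symm
      subst hx' hy' hm'
      refine ⟨by omega, hy1, by omega, hgcd, ?_⟩
      have hms : L / s - 1 + 1 = L / s := by omega
      rw [show (s - L % s) * (L / s - 1 + 1) + L % s * (L / s - 1 + 2)
          = (s - L % s + L % s) * (L / s - 1 + 1) + L % s * 1 by ring]
      rw [show s - L % s + L % s = s by omega, hms, mul_one]
      exact hmd
  rw [hset, Set.ncard_coe_finset]
  rw [Finset.card_image_of_injOn]
  · exact cardT L hL
  · intro s1 h1 s2 h2 heq
    simp only [hT, Finset.mem_coe, Finset.mem_filter, Finset.mem_Ico] at h1 h2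
    simp only [hf, Prod.mk.injEq] at heq
    obtain ⟨e1, e2, e3⟩ := heq
    have m1 : L % s1 < s1 := Nat.mod_lt _ (by omega)
    have m2 : L % s2 < s2 := Nat.mod_lt _ (by omega)
    omega
end

section
/- Let L be an even positive integer and let S_2(L) be the set of triples (x, y, m) of positive integers with gcd(x, y) = 2 and x(m+1) + y(m+2) = L. Then |S_2(L)| = ⌈φ(L/2)/2⌉ - 1. If L is odd, S_2(L) is empty. -/
open Finset

private lemma cop_sub {N k : ℕ} (hk : k ≤ N) :
    Nat.gcd (N - k) N = Nat.gcd N k := by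
  have h1 : Nat.gcd (k + (N - k)) (N - k) = Nat.gcd k (N - k) := Nat.gcd_add_self_left (N - k) k
  rw [show k + (N - k) = N from by omega] at h1
  rw [Nat.gcd_comm, h1, Nat.gcd_sub_self_right hk, Nat.gcd_comm]

private lemma half_tot (N : ℕ) (hN : 3 ≤ N) :
    2 * ((range (N / 2 + 1)).filter (fun s => Nat.Coprime s N)).card = N.totient := by
  have hmod := Nat.div_add_mod N 2
  have hmod2 : N % 2 < 2 := Nat.mod_lt _ (by norm_num)
  set A := (range (N / 2 + 1)).filter (fun s => Nat.Coprime s N) with hA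
  set B := (Ico (N / 2 + 1) N).filter (fun s => Nat.Coprime s N) with hB
  have key : ∀ k, Nat.Coprime k N → k ≤ N → Nat.Coprime (N - k) N := by
    intro k hc hk
    unfold Nat.Coprime at *
    rw [cop_sub hk, Nat.gcd_comm]
    exact hc
  have hcard : A.card = B.card := by
    apply card_bij' (fun k _ => N - k) (fun k _ => N - k)
    · intro k hk
      simp only [hA, hB, mem_filter, mem_range, mem_Ico] at hk ⊢
      obtain ⟨hk1, hk2⟩ := hk
      have hk0 : k ≠ 0 := by
        rintro rfl
        have h0 : Nat.gcd 0 N = 1 := hk2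
        rw [Nat.gcd_zero_left] at h0
        omega
      have hne : k < N / 2 ∨ N % 2 = 1 := by
        by_contra hcon
        push_neg at hcon
        obtain ⟨h1, h2⟩ := hcon
        have hk' : k = N / 2 := by omega
        have hdvd : N / 2 ∣ N := ⟨2, by omega⟩
        have hg := Nat.gcd_eq_left hdvd
        rw [hk'] at hk2
        have : N / 2 = 1 := hg.symm.trans hk2
        omega
      exact ⟨⟨by omega, by omega⟩, key k hk2 (by omega)⟩
    · intro k hk
      simp only [hA, hB, mem_filter, mem_range, mem_Ico] at hk ⊢
      obtain ⟨⟨hk1, hk2⟩, hk3⟩ := hk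
      exact ⟨by omega, key k hk3 (by omega)⟩
    · intro k hk
      simp only [hA, mem_filter, mem_range] at hk
      omega
    · intro k hk
      simp only [hB, mem_filter, mem_Ico] at hk
      omega
  have hunion : A ∪ B = (range N).filter (fun s => Nat.Coprime s N) := by
    rw [hA, hB, ← filter_union]
    congr 1
    ext a
    simp only [Finset.mem_union, Finset.mem_range, Finset.mem_Ico]
    omega
  have hdisj : Disjoint A B := by
    rw [Finset.disjoint_left]
    intro a ha hb
    simp only [hA, hB, mem_filter, mem_range, mem_Ico] at ha hb
    omega
  have hpred : (range N).filter (fun a => N.Coprime a)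
      = (range N).filter (fun s => Nat.Coprime s N) := by
    apply filter_congr
    intro x _
    exact Nat.coprime_comm
  have htot : N.totient = A.card + B.card := by
    rw [Nat.totient_eq_card_coprime, hpred, ← hunion, card_union_of_disjoint hdisj]
  omega

private lemma count_T (N : ℕ) (hN : 1 ≤ N) :
    ((range (N / 2 + 1)).filter (fun s => 2 ≤ s ∧ Nat.Coprime s N)).card
      = (N.totient + 1) / 2 - 1 := by
  rcases Nat.lt_or_ge N 3 with h3 | h3
  · interval_cases N <;> decide
  · have hhalf := half_tot N h3
    have hT : (range (N / 2 + 1)).filter (fun s => 2 ≤ s ∧ Nat.Coprime s N)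
        = ((range (N / 2 + 1)).filter (fun s => Nat.Coprime s N)).erase 1 := by
      ext s
      simp only [mem_erase, mem_filter, mem_range]
      constructor
      · rintro ⟨hs, h2, hc⟩
        exact ⟨by omega, hs, hc⟩
      · rintro ⟨h1, hs, hc⟩
        refine ⟨hs, ?_, hc⟩
        rcases Nat.lt_or_ge s 2 with h | h
        · exfalso
          interval_cases s
          · have h0 : Nat.gcd 0 N = 1 := hc
            rw [Nat.gcd_zero_left] at h0
            omega
          · exact h1 rfl
        · exact h
    have h1mem : (1 : ℕ) ∈ (range (N / 2 + 1)).filter (fun s => Nat.Coprime s N) := by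
      simp only [mem_filter, mem_range]
      exact ⟨by omega, Nat.coprime_one_left N⟩
    rw [hT, card_erase_of_mem h1mem]
    omega

/-- Let `S₂(L)` be the set of triples `(x, y, m)` of positive integers with
`gcd(x, y) = 2` and `x(m+1) + y(m+2) = L`.  If `L` is even then
`|S₂(L)| = ⌈φ(L/2)/2⌉ - 1`; if `L` is odd then `S₂(L)` is empty. -/
theorem stmt6 (L : ℕ) (hL : 1 ≤ L) :
    (Even L →
      {p : ℕ × ℕ × ℕ | 1 ≤ p.1 ∧ 1 ≤ p.2.1 ∧ 1 ≤ p.2.2 ∧ Nat.gcd p.1 p.2.1 = 2 ∧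
          p.1 * (p.2.2 + 1) + p.2.1 * (p.2.2 + 2) = L}.ncard
        = (Nat.totient (L / 2) + 1) / 2 - 1) ∧
    (Odd L →
      {p : ℕ × ℕ × ℕ | 1 ≤ p.1 ∧ 1 ≤ p.2.1 ∧ 1 ≤ p.2.2 ∧ Nat.gcd p.1 p.2.1 = 2 ∧
          p.1 * (p.2.2 + 1) + p.2.1 * (p.2.2 + 2) = L} = ∅) := by
  constructor
  · intro hEven
    obtain ⟨N, rfl⟩ := hEven
    have hN1 : 1 ≤ N := by omega
    have hL2 : (N + N) / 2 = N := by omega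
    rw [hL2]
    set T := (range (N / 2 + 1)).filter (fun s => 2 ≤ s ∧ Nat.Coprime s N) with hT
    have himg : {p : ℕ × ℕ × ℕ | 1 ≤ p.1 ∧ 1 ≤ p.2.1 ∧ 1 ≤ p.2.2 ∧ Nat.gcd p.1 p.2.1 = 2 ∧
          p.1 * (p.2.2 + 1) + p.2.1 * (p.2.2 + 2) = N + N}
        = (fun s => (2 * (s - N % s), 2 * (N % s), N / s - 1)) '' ↑T := by
      ext ⟨x, y, m⟩
      simp only [Set.mem_setOf_eq, Set.mem_image, Finset.mem_coe, hT, mem_filter, mem_range]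
      constructor
      · rintro ⟨hx, hy, hm, hg, heq⟩
        obtain ⟨x', rfl⟩ : 2 ∣ x := hg ▸ Nat.gcd_dvd_left x y
        obtain ⟨y', rfl⟩ : 2 ∣ y := hg ▸ Nat.gcd_dvd_right (2 * x') y
        have hg' : Nat.gcd x' y' = 1 := by
          rw [Nat.gcd_mul_left] at hg
          omega
        have heq' : x' * (m + 1) + y' * (m + 2) = N := by
          have h2 : 2 * (x' * (m + 1) + y' * (m + 2)) = 2 * N := by linarith [heq]
          exact Nat.eq_of_mul_eq_mul_left (by norm_num) h2
        have hx1 : 1 ≤ x' := by omega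
        have hy1 : 1 ≤ y' := by omega
        have hNs : N = (x' + y') * (m + 1) + y' := by
          rw [← heq']
          ring
        have hylt : y' < x' + y' := by omega
        have hmodN : N % (x' + y') = y' := by
          rw [hNs, Nat.mul_add_mod, Nat.mod_eq_of_lt hylt]
        have hdivN : N / (x' + y') = m + 1 := by
          rw [hNs, Nat.mul_add_div (by omega), Nat.div_eq_of_lt hylt, add_zero]
        have h2s : (x' + y') * 2 ≤ N := by
          have hmm : (x' + y') * 2 ≤ (x' + y') * (m + 1) :=
            Nat.mul_le_mul_left _ (by omega)
          omega
        have hsrange : x' + y' < N / 2 + 1 := by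
          have := (Nat.le_div_iff_mul_le (by norm_num : 0 < 2)).mpr h2s
          omega
        have hcop : Nat.Coprime (x' + y') N := by
          unfold Nat.Coprime
          rw [Nat.gcd_rec, hmodN]
          rw [Nat.gcd_comm] at hg'
          calc Nat.gcd y' (x' + y') = Nat.gcd y' x' := Nat.gcd_add_self_right y' x'
            _ = 1 := hg'
        refine ⟨x' + y', ⟨hsrange, by omega, hcop⟩, ?_⟩
        simp only [hmodN, hdivN, Prod.mk.injEq]
        refine ⟨?_, ?_, ?_⟩ <;> first | trivial | omega
      · rintro ⟨s, ⟨hsr, hs2, hsc⟩, heqp⟩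
        rw [Prod.mk.injEq, Prod.mk.injEq] at heqp
        obtain ⟨h1, h2, h3⟩ := heqp
        subst h1; subst h2; subst h3
        have hs0 : 0 < s := by omega
        have hy : N % s < s := Nat.mod_lt _ hs0
        have hy0 : N % s ≠ 0 := by
          intro h
          have hdvd : s ∣ N := Nat.dvd_of_mod_eq_zero h
          have hg := Nat.gcd_eq_left hdvd
          have : s = 1 := hg.symm.trans hsc
          omega
        have hdiv2 : 2 ≤ N / s := by
          have hs' : s * 2 ≤ N := (Nat.le_div_iff_mul_le (by norm_num : 0 < 2)).mp (by omega)
          exact (Nat.le_div_iff_mul_le hs0).mpr (by omega)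
        have hda := Nat.div_add_mod N s
        refine ⟨by omega, by omega, by omega, ?_, ?_⟩
        · rw [Nat.gcd_mul_left]
          have hgs : Nat.gcd (s - N % s) (N % s) = 1 := by
            rw [Nat.gcd_sub_self_left hy.le, Nat.gcd_comm, ← Nat.gcd_rec]
            exact hsc
          rw [hgs]
        · have h1 : N / s - 1 + 1 = N / s := by omega
          have h2 : N / s - 1 + 2 = N / s + 1 := by omega
          rw [h1, h2]
          have hsub : s - N % s + N % s = s := by omega
          have hre : 2 * (s - N % s) * (N / s) + 2 * (N % s) * (N / s + 1)
              = 2 * ((s - N % s + N % s) * (N / s) + N % s) := by ring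
          rw [hre, hsub, hda]
          omega
    have hinj : Set.InjOn (fun s => (2 * (s - N % s), 2 * (N % s), N / s - 1)) ↑T := by
      intro a ha b hb hab
      simp only [hT, Finset.mem_coe, mem_filter, mem_range] at ha hb
      simp only [Prod.mk.injEq] at hab
      obtain ⟨h1, h2, _⟩ := hab
      have ha' : N % a < a := Nat.mod_lt _ (by omega)
      have hb' : N % b < b := Nat.mod_lt _ (by omega)
      have e2 : N % a = N % b := Nat.eq_of_mul_eq_mul_left (by norm_num) h2
      have e1 : a - N % a = b - N % b := Nat.eq_of_mul_eq_mul_left (by norm_num) h1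
      have : (a - N % a) + N % a = (b - N % b) + N % b := by rw [e1, e2]
      rwa [Nat.sub_add_cancel ha'.le, Nat.sub_add_cancel hb'.le] at this
    rw [himg, Set.ncard_image_of_injOn hinj, Set.ncard_coe_finset]
    exact count_T N hN1
  · intro hOdd
    ext ⟨x, y, m⟩
    simp only [Set.mem_setOf_eq, Set.mem_empty_iff_false, iff_false]
    rintro ⟨hx, hy, hm, hg, heq⟩
    have h2x : 2 ∣ x := hg ▸ Nat.gcd_dvd_left x y
    have h2y : 2 ∣ y := hg ▸ Nat.gcd_dvd_right x y
    have h2L : 2 ∣ L := by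
      rw [← heq]
      exact Dvd.dvd.add (h2x.mul_right _) (h2y.mul_right _)
    obtain ⟨k, rfl⟩ := hOdd
    omega
end

section
/- For every integer L ≥ 1, Σ_{d | L} |S_1(L/d)| = ⌊L/2⌋ - σ_0(L) + 1, where S_1(n) is the set of triples (x, y, m) of positive integers with gcd(x, y) = 1 and x(m+1) + y(m+2) = n, and σ_0(L) is the number of positive divisors of L. -/
/-- `S₁(n)`: triples `(x, y, m)` of positive integers with `gcd(x, y) = 1` and
`x(m+1) + y(m+2) = n`. -/
def S1 (n : ℕ) : Set (ℕ × ℕ × ℕ) :=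
  {p | 1 ≤ p.1 ∧ 1 ≤ p.2.1 ∧ 1 ≤ p.2.2 ∧ Nat.gcd p.1 p.2.1 = 1 ∧
      p.1 * (p.2.2 + 1) + p.2.1 * (p.2.2 + 2) = n}

open Finset

/-- Finset version of `S1`. -/
def Fs (n : ℕ) : Finset (ℕ × ℕ × ℕ) :=
  (Icc 1 n ×ˢ Icc 1 n ×ˢ Icc 1 n).filter fun p =>
    Nat.gcd p.1 p.2.1 = 1 ∧ p.1 * (p.2.2 + 1) + p.2.1 * (p.2.2 + 2) = n

lemma mem_Fs {n x y m : ℕ} :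
    (x, y, m) ∈ Fs n ↔ 1 ≤ x ∧ 1 ≤ y ∧ 1 ≤ m ∧ Nat.gcd x y = 1 ∧
      x * (m + 1) + y * (m + 2) = n := by
  simp only [Fs, mem_filter, mem_product, mem_Icc]
  constructor
  · rintro ⟨⟨hx, hy, hm⟩, hg, he⟩
    exact ⟨hx.1, hy.1, hm.1, hg, he⟩
  · rintro ⟨hx, hy, hm, hg, he⟩
    have h1 : x ≤ x * (m + 1) := Nat.le_mul_of_pos_right x (by omega)
    have h2 : y ≤ y * (m + 2) := Nat.le_mul_of_pos_right y (by omega)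
    have h3 : m + 2 ≤ y * (m + 2) := Nat.le_mul_of_pos_left (m + 2) (by omega)
    refine ⟨⟨⟨hx, by linarith⟩, ⟨hy, by linarith⟩, ⟨hm, by linarith⟩⟩, hg, he⟩

lemma S1_eq_Fs (n : ℕ) : S1 n = ↑(Fs n) := by
  ext ⟨x, y, m⟩
  simp only [S1, Set.mem_setOf_eq, mem_coe, mem_Fs]

/-- Triples without the gcd condition. -/
def Gs (L : ℕ) : Finset (ℕ × ℕ × ℕ) :=
  (Icc 1 L ×ˢ Icc 1 L ×ˢ Icc 1 L).filter fun p =>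
    p.1 * (p.2.2 + 1) + p.2.1 * (p.2.2 + 2) = L

lemma mem_Gs {L x y m : ℕ} :
    (x, y, m) ∈ Gs L ↔ 1 ≤ x ∧ 1 ≤ y ∧ 1 ≤ m ∧
      x * (m + 1) + y * (m + 2) = L := by
  simp only [Gs, mem_filter, mem_product, mem_Icc]
  constructor
  · rintro ⟨⟨hx, hy, hm⟩, he⟩
    exact ⟨hx.1, hy.1, hm.1, he⟩
  · rintro ⟨hx, hy, hm, he⟩
    have h1 : x ≤ x * (m + 1) := Nat.le_mul_of_pos_right x (by omega)
    have h2 : y ≤ y * (m + 2) := Nat.le_mul_of_pos_right y (by omega)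
    have h3 : m + 2 ≤ y * (m + 2) := Nat.le_mul_of_pos_left (m + 2) (by omega)
    exact ⟨⟨⟨hx, by linarith⟩, ⟨hy, by linarith⟩, ⟨hm, by linarith⟩⟩, he⟩

lemma step1 (L : ℕ) (hL : 1 ≤ L) :
    ∑ d ∈ L.divisors, (Fs (L / d)).card = (Gs L).card := by
  rw [Finset.card_eq_sum_card_fiberwise
      (f := fun p : ℕ × ℕ × ℕ => Nat.gcd p.1 p.2.1) (t := L.divisors) ?_]
  · refine Finset.sum_congr rfl fun d hd => ?_
    obtain ⟨hdL, hL0⟩ := Nat.mem_divisors.mp hd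
    have hd0 : 0 < d := Nat.pos_of_mem_divisors hd
    refine Finset.card_bij' (fun q _ => (d * q.1, d * q.2.1, q.2.2))
      (fun p _ => (p.1 / d, p.2.1 / d, p.2.2)) ?_ ?_ ?_ ?_
    · rintro ⟨x, y, m⟩ hq
      obtain ⟨hx, hy, hm, hg, he⟩ := mem_Fs.mp hq
      simp only [mem_filter]
      constructor
      · rw [mem_Gs]
        refine ⟨Nat.mul_pos hd0 hx, Nat.mul_pos hd0 hy, hm, ?_⟩
        have : d * x * (m + 1) + d * y * (m + 2)
            = d * (x * (m + 1) + y * (m + 2)) := by ring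
        rw [this, he, Nat.mul_div_cancel' hdL]
      · simp only [Nat.gcd_mul_left, hg, mul_one]
    · rintro ⟨x, y, m⟩ hp
      obtain ⟨hp1, hgcd⟩ := Finset.mem_filter.mp hp
      obtain ⟨hx, hy, hm, he⟩ := mem_Gs.mp hp1
      simp only at hgcd
      have hdx : d ∣ x := hgcd ▸ Nat.gcd_dvd_left x y
      have hdy : d ∣ y := hgcd ▸ Nat.gcd_dvd_right x y
      rw [mem_Fs]
      have hlex : d ≤ x := Nat.le_of_dvd (by omega) hdx
      have hley : d ≤ y := Nat.le_of_dvd (by omega) hdy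
      refine ⟨Nat.one_le_div_iff hd0 |>.mpr hlex,
        Nat.one_le_div_iff hd0 |>.mpr hley, hm, ?_, ?_⟩
      · have := Nat.coprime_div_gcd_div_gcd (m := x) (n := y) (by omega)
        rwa [hgcd] at this
      · apply Nat.eq_of_mul_eq_mul_left hd0
        have h1 : d * (x / d * (m + 1) + y / d * (m + 2))
            = (d * (x / d)) * (m + 1) + (d * (y / d)) * (m + 2) := by ring
        rw [h1, Nat.mul_div_cancel' hdx, Nat.mul_div_cancel' hdy, he,
          Nat.mul_div_cancel' hdL]
    · rintro ⟨x, y, m⟩ hq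
      simp only [Nat.mul_div_cancel_left _ hd0]
    · rintro ⟨x, y, m⟩ hp
      obtain ⟨hp1, hgcd⟩ := Finset.mem_filter.mp hp
      simp only at hgcd
      have hdx : d ∣ x := hgcd ▸ Nat.gcd_dvd_left x y
      have hdy : d ∣ y := hgcd ▸ Nat.gcd_dvd_right x y
      simp only [Nat.mul_div_cancel' hdx, Nat.mul_div_cancel' hdy]
  · rintro ⟨x, y, m⟩ hp
    obtain ⟨hx, hy, hm, he⟩ := mem_Gs.mp hp
    rw [Finset.mem_coe, Nat.mem_divisors]
    refine ⟨?_, by omega⟩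
    have h1 : Nat.gcd x y ∣ x * (m + 1) := (Nat.gcd_dvd_left x y).mul_right _
    have h2 : Nat.gcd x y ∣ y * (m + 2) := (Nat.gcd_dvd_right x y).mul_right _
    exact he ▸ dvd_add h1 h2

lemma step2 (L : ℕ) (hL : 1 ≤ L) :
    (Gs L).card = ((Icc 1 (L / 2)).filter fun s => ¬ s ∣ L).card := by
  refine Finset.card_bij (fun p _ => p.1 + p.2.1) ?_ ?_ ?_
  · rintro ⟨x, y, m⟩ hp
    obtain ⟨hx, hy, hm, he⟩ := mem_Gs.mp hp
    have he' : (x + y) * (m + 1) + y = L := by rw [← he]; ring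
    simp only [mem_filter, mem_Icc]
    have hylt : y < x + y := by omega
    refine ⟨⟨by omega, ?_⟩, ?_⟩
    · rw [Nat.le_div_iff_mul_le (by norm_num)]
      have : (x + y) * 2 ≤ (x + y) * (m + 1) := Nat.mul_le_mul_left _ (by omega)
      omega
    · intro hdvd
      have hs1 : (x + y) ∣ (x + y) * (m + 1) := Dvd.intro _ rfl
      have hsy : (x + y) ∣ y := by
        have := Nat.dvd_sub hdvd hs1
        rwa [show L - (x + y) * (m + 1) = y by omega] at this
      have := Nat.le_of_dvd (by omega) hsy
      omega
  · rintro ⟨x, y, m⟩ hp ⟨x', y', m'⟩ hq hsum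
    obtain ⟨hx, hy, hm, he⟩ := mem_Gs.mp hp
    obtain ⟨hx', hy', hm', he'⟩ := mem_Gs.mp hq
    simp only at hsum
    have hp' : (x + y) * (m + 1) + y = L := by rw [← he]; ring
    have hq' : (x + y) * (m' + 1) + y' = L := by rw [← he', hsum]; ring
    have hmm : m = m' := by
      by_contra hne
      rcases Nat.lt_or_ge m m' with h | h
      · have : (x + y) * (m + 1) + (x + y) ≤ (x + y) * (m' + 1) := by
          have : (x + y) * (m + 2) ≤ (x + y) * (m' + 1) :=
            Nat.mul_le_mul_left _ (by omega)
          linarith [this]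
        omega
      · have h2 : m' < m := by omega
        have : (x + y) * (m' + 1) + (x + y) ≤ (x + y) * (m + 1) := by
          have : (x + y) * (m' + 2) ≤ (x + y) * (m + 1) :=
            Nat.mul_le_mul_left _ (by omega)
          linarith [this]
        omega
    subst hmm
    have hyy : y = y' := by omega
    have hxx : x = x' := by omega
    simp [hxx, hyy]
  · intro s hs
    simp only [mem_filter, mem_Icc] at hs
    obtain ⟨⟨hs1, hs2⟩, hnd⟩ := hs
    have hs2' : s * 2 ≤ L := (Nat.le_div_iff_mul_le (by norm_num)).mp hs2
    have hsge2 : 2 ≤ s := by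
      rcases Nat.lt_or_ge s 2 with h | h
      · interval_cases s
        · exact absurd (one_dvd L) hnd
      · exact h
    have ha : 2 ≤ L / s := (Nat.le_div_iff_mul_le (by omega)).mpr (by omega)
    have hY0 : 0 < L % s := Nat.pos_of_ne_zero fun h => hnd (Nat.dvd_of_mod_eq_zero h)
    have hYlt : L % s < s := Nat.mod_lt _ (by omega)
    refine ⟨(s - L % s, L % s, L / s - 1), ?_, ?_⟩
    swap
    · show s - L % s + L % s = s
      omega
    rw [mem_Gs]
    refine ⟨by omega, by omega, by omega, ?_⟩
    have h1 : L / s - 1 + 1 = L / s := by omega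
    have h2 : L / s - 1 + 2 = L / s + 1 := by omega
    rw [h1, h2]
    have key : (s - L % s) * (L / s) + L % s * (L / s + 1)
        = s * (L / s) + L % s := by
      have : s - L % s + L % s = s := by omega
      nlinarith [this]
    rw [key]
    exact Nat.div_add_mod L s

/-- For `L ≥ 1`, `∑_{d ∣ L} |S₁(L/d)| = ⌊L/2⌋ - σ₀(L) + 1`, where `σ₀(L)` is the number
of positive divisors of `L`. -/
theorem stmt7 (L : ℕ) (hL : 1 ≤ L) :
    (∑ d ∈ L.divisors, ((S1 (L / d)).ncard : ℤ))
      = (L / 2 : ℕ) - (L.divisors.card : ℤ) + 1 := by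
  have hcast : ∀ d ∈ L.divisors, ((S1 (L / d)).ncard : ℤ) = ((Fs (L / d)).card : ℤ) := by
    intro d _
    rw [S1_eq_Fs, Set.ncard_coe_finset]
  rw [Finset.sum_congr rfl hcast, ← Nat.cast_sum, step1 L hL, step2 L hL]
  -- counting step
  have hfilter : ((Icc 1 (L / 2)).filter fun s => s ∣ L) = L.divisors.erase L := by
    ext d
    simp only [mem_filter, mem_Icc, Finset.mem_erase, Nat.mem_divisors]
    constructor
    · rintro ⟨⟨hd1, hd2⟩, hdvd⟩
      have : L / 2 < L := Nat.div_lt_self (by omega) (by norm_num)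
      exact ⟨by omega, hdvd, by omega⟩
    · rintro ⟨hne, hdvd, hL0⟩
      have hd1 : 1 ≤ d := Nat.pos_of_dvd_of_pos hdvd (by omega)
      obtain ⟨k, hk⟩ := id hdvd
      have hk2 : 2 ≤ k := by
        rcases Nat.lt_or_ge k 2 with h | h
        · interval_cases k <;> omega
        · exact h
      refine ⟨⟨hd1, ?_⟩, hdvd⟩
      rw [Nat.le_div_iff_mul_le (by norm_num)]
      nlinarith
  have hsplit := Finset.card_filter_add_card_filter_not
    (s := Icc 1 (L / 2)) (p := fun s => s ∣ L)
  rw [Nat.card_Icc] at hsplit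
  rw [hfilter] at hsplit
  have hLmem : L ∈ L.divisors := Nat.mem_divisors_self L (by omega)
  have herase : (L.divisors.erase L).card = L.divisors.card - 1 :=
    Finset.card_erase_of_mem hLmem
  have hdpos : 1 ≤ L.divisors.card := Finset.card_pos.mpr ⟨L, hLmem⟩
  omega
end

section
/- Define Λ₊(x, y, m) = (x-1, y+1, m) if x ≥ 2 and Λ₊(1, y, m) = (y+1, 0, m+1). Then Λ₊ maps the solution set S(L) = {(x,y,m) : x,m ≥ 1, y ≥ 0, x(m+1)+y(m+2)=L} injectively into S(L+1); it is a bijection onto S(L+1) when L is even, and when L is odd its image misses exactly one element of S(L+1). -/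
/-- The solution set `S(L)` of `x(m+1) + y(m+2) = L` with `x ≥ 1`, `y ≥ 0`, `m ≥ 1`. -/
def Ssol (L : ℕ) : Set (ℕ × ℕ × ℕ) :=
  {p | 1 ≤ p.1 ∧ 1 ≤ p.2.2 ∧ p.1 * (p.2.2 + 1) + p.2.1 * (p.2.2 + 2) = L}

/-- `Λ₊(x, y, m) = (x-1, y+1, m)` if `x ≥ 2`, and `Λ₊(1, y, m) = (y+1, 0, m+1)`. -/
def lamPlus (p : ℕ × ℕ × ℕ) : ℕ × ℕ × ℕ :=
  if 2 ≤ p.1 then (p.1 - 1, p.2.1 + 1, p.2.2) else (p.2.1 + 1, 0, p.2.2 + 1)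

lemma image_eq (L : ℕ) :
    lamPlus '' Ssol L = {q ∈ Ssol (L + 1) | ¬ (q.2.1 = 0 ∧ q.2.2 = 1)} := by
  ext ⟨x, y, m⟩
  simp only [Set.mem_image, Set.mem_setOf_eq, Ssol]
  constructor
  · rintro ⟨⟨a, b, c⟩, ⟨ha, hc, habc⟩, heq⟩
    simp only at ha hc habc
    unfold lamPlus at heq
    by_cases h2 : 2 ≤ a
    · rw [if_pos h2] at heq
      simp only [Prod.ext_iff] at heq
      obtain ⟨h1, h2', h3⟩ := heq
      obtain ⟨a', rfl⟩ : ∃ a', a = a' + 2 := ⟨a - 2, by omega⟩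
      subst h3
      obtain rfl : x = a' + 1 := by omega
      subst h2'
      refine ⟨⟨by omega, hc, ?_⟩, by omega⟩
      ring_nf at habc ⊢; omega
    · rw [if_neg h2] at heq
      simp only [Prod.ext_iff] at heq
      obtain ⟨h1, h2', h3⟩ := heq
      obtain rfl : a = 1 := by omega
      subst h1; subst h3; subst h2'
      refine ⟨⟨by omega, by omega, ?_⟩, by omega⟩
      ring_nf at habc ⊢; omega
  · rintro ⟨⟨hx, hm, hsum⟩, hnot⟩
    by_cases hy : 1 ≤ y
    · obtain ⟨y', rfl⟩ : ∃ y', y = y' + 1 := ⟨y - 1, by omega⟩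
      refine ⟨(x + 1, y', m), ⟨by omega, hm, ?_⟩, ?_⟩
      · simp only; ring_nf at hsum ⊢; omega
      · unfold lamPlus
        rw [if_pos (by simp; omega)]
        simp
    · obtain rfl : y = 0 := by omega
      have hm2 : 2 ≤ m := by
        rcases Nat.lt_or_ge m 2 with h | h
        · exact absurd ⟨rfl, by omega⟩ hnot
        · exact h
      obtain ⟨m', rfl⟩ : ∃ m', m = m' + 2 := ⟨m - 2, by omega⟩
      obtain ⟨x', rfl⟩ : ∃ x', x = x' + 1 := ⟨x - 1, by omega⟩
      refine ⟨(1, x', m' + 1), ⟨le_refl 1, by simp, ?_⟩, ?_⟩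
      · show 1 * (m' + 1 + 1) + x' * (m' + 1 + 2) = L
        ring_nf at hsum ⊢
        omega
      · unfold lamPlus
        rw [if_neg (by simp)]

/-- `Λ₊` maps `S(L)` injectively into `S(L+1)`; it is a bijection onto `S(L+1)` when `L`
is even, and when `L` is odd its image misses exactly one element of `S(L+1)`. -/
theorem stmt8 (L : ℕ) :
    Set.MapsTo lamPlus (Ssol L) (Ssol (L + 1)) ∧
    Set.InjOn lamPlus (Ssol L) ∧
    (Even L → lamPlus '' Ssol L = Ssol (L + 1)) ∧
    (Odd L → (Ssol (L + 1) \ lamPlus '' Ssol L).ncard = 1) := by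
  have hmapsto : Set.MapsTo lamPlus (Ssol L) (Ssol (L + 1)) := by
    rintro ⟨x, y, m⟩ ⟨hx, hm, hsum⟩
    simp only at hx hm hsum
    unfold lamPlus
    by_cases h2 : 2 ≤ x
    · rw [if_pos h2]
      obtain ⟨x', rfl⟩ : ∃ x', x = x' + 2 := ⟨x - 2, by omega⟩
      refine ⟨by simp, hm, ?_⟩
      simp only
      rw [show x' + 2 - 1 = x' + 1 from rfl]
      ring_nf at hsum ⊢; omega
    · rw [if_neg h2]
      obtain rfl : x = 1 := by omega
      refine ⟨by simp, by simp, ?_⟩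
      simp only; ring_nf at hsum ⊢; omega
  refine ⟨hmapsto, ?_, ?_, ?_⟩
  · rintro ⟨x, y, m⟩ ⟨hx, hm, _⟩ ⟨a, b, c⟩ ⟨ha, hc, _⟩ heq
    simp only at hx hm ha hc
    unfold lamPlus at heq
    by_cases h1 : 2 ≤ x <;> by_cases h2 : 2 ≤ a <;>
      simp [h1, h2, Prod.ext_iff] at heq ⊢ <;> omega
  · intro hL
    rw [image_eq]
    ext ⟨x, y, m⟩
    simp only [Set.mem_setOf_eq, Ssol]
    constructor
    · tauto
    · intro ⟨hx, hm, hsum⟩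
      refine ⟨⟨hx, hm, hsum⟩, ?_⟩
      rintro ⟨rfl, rfl⟩
      obtain ⟨k, rfl⟩ := hL
      omega
  · intro hL
    rw [image_eq]
    have : (Ssol (L + 1) \ {q ∈ Ssol (L + 1) | ¬(q.2.1 = 0 ∧ q.2.2 = 1)}) =
        {((L + 1) / 2, 0, 1)} := by
      ext ⟨x, y, m⟩
      simp only [Set.mem_diff, Set.mem_setOf_eq, Set.mem_singleton_iff, Ssol, Prod.ext_iff]
      obtain ⟨k, rfl⟩ := hL
      constructor
      · rintro ⟨⟨hx, hm, hsum⟩, h2⟩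
        push_neg at h2
        obtain ⟨rfl, rfl⟩ : y = 0 ∧ m = 1 := h2 ⟨hx, hm, hsum⟩
        refine ⟨by omega, rfl, rfl⟩
      · rintro ⟨rfl, rfl, rfl⟩
        refine ⟨⟨by omega, by omega, by simp; omega⟩, ?_⟩
        intro h
        exact h.2 ⟨rfl, rfl⟩
    rw [this, Set.ncard_singleton]
end

section
/- Let w be a necklace with small variation containing exactly x occurrences of m and y occurrences of m+1, with x ≥ y ≥ 1, and let q = x/y. Then every maximal run of consecutive m's in w has length ⌊q⌋ or ⌈q⌉, and every maximal run of consecutive (m+1)'s has length 1. -/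
/-- The sum of `s` consecutive entries of the cyclic sequence `f` starting after `i`. -/
def cycSum {k : ℕ} (f : ZMod k → ℕ) (i : ZMod k) (s : ℕ) : ℕ :=
  ∑ j ∈ Finset.range s, f (i + (j : ZMod k))

/-- Small variation: any two sums of `s` cyclically consecutive entries differ by at
most `1`, for every `s ≥ 1`. -/
def SmallVar {k : ℕ} (f : ZMod k → ℕ) : Prop :=
  ∀ s : ℕ, 1 ≤ s → ∀ i₁ i₂ : ZMod k, |(cycSum f i₁ s : ℤ) - (cycSum f i₂ s : ℤ)| ≤ 1

/-- `IsRun f v i l`: starting at position `i` there is a maximal cyclically contiguous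
block of `l` entries all equal to `v`. -/
def IsRun {k : ℕ} (f : ZMod k → ℕ) (v : ℕ) (i : ZMod k) (l : ℕ) : Prop :=
  1 ≤ l ∧ (∀ j < l, f (i + (j : ZMod k)) = v) ∧ f (i - 1) ≠ v ∧ f (i + (l : ZMod k)) ≠ v

lemma cycSum_total {k : ℕ} [NeZero k] (f : ZMod k → ℕ) (s : ℕ) :
    ∑ i : ZMod k, cycSum f i s = s * ∑ i : ZMod k, f i := by
  unfold cycSum
  rw [Finset.sum_comm]
  have h : ∀ j : ℕ, ∑ i : ZMod k, f (i + (j : ZMod k)) = ∑ i : ZMod k, f i := by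
    intro j
    exact Fintype.sum_equiv (Equiv.addRight ((j : ZMod k))) _ f (fun i => rfl)
  simp only [h]
  rw [Finset.sum_const, Finset.card_range, smul_eq_mul]

lemma keyLB {k : ℕ} [NeZero k] (g : ZMod k → ℕ) (i0 : ZMod k) (a : ℕ)
    (h0 : a + 1 ≤ g i0) (hlb : ∀ i, a ≤ g i) :
    k * a + 1 ≤ ∑ i : ZMod k, g i := by
  have h1 : (k - 1) * a ≤ ∑ i ∈ Finset.univ.erase i0, g i := by
    calc (k - 1) * a = ∑ _i ∈ Finset.univ.erase i0, a := by
          rw [Finset.sum_const, Finset.card_erase_of_mem (Finset.mem_univ _),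
            Finset.card_univ, ZMod.card, smul_eq_mul]
      _ ≤ _ := Finset.sum_le_sum (fun i _ => hlb i)
  have h2 := Finset.add_sum_erase Finset.univ g (Finset.mem_univ i0)
  have hk : 1 ≤ k := Nat.one_le_iff_ne_zero.2 (NeZero.ne k)
  obtain ⟨k', rfl⟩ : ∃ k', k = k' + 1 := ⟨k - 1, by omega⟩
  have e1 : (k' + 1) * a = k' * a + a := by ring
  simp only [Nat.add_sub_cancel] at h1
  omega

lemma keyUB {k : ℕ} [NeZero k] (g : ZMod k → ℕ) (i0 : ZMod k) (a : ℕ)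
    (h0 : g i0 ≤ a) (hub : ∀ i, g i ≤ a + 1) :
    (∑ i : ZMod k, g i) + 1 ≤ k * (a + 1) := by
  have h1 : ∑ i ∈ Finset.univ.erase i0, g i ≤ (k - 1) * (a + 1) := by
    calc ∑ i ∈ Finset.univ.erase i0, g i ≤ ∑ _i ∈ Finset.univ.erase i0, (a + 1) :=
          Finset.sum_le_sum (fun i _ => hub i)
      _ = (k - 1) * (a + 1) := by
          rw [Finset.sum_const, Finset.card_erase_of_mem (Finset.mem_univ _),
            Finset.card_univ, ZMod.card, smul_eq_mul]
  have h2 := Finset.add_sum_erase Finset.univ g (Finset.mem_univ i0)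
  have hk : 1 ≤ k := Nat.one_le_iff_ne_zero.2 (NeZero.ne k)
  obtain ⟨k', rfl⟩ : ∃ k', k = k' + 1 := ⟨k - 1, by omega⟩
  have e1 : (k' + 1) * (a + 1) = k' * (a + 1) + (a + 1) := by ring
  simp only [Nat.add_sub_cancel] at h1
  omega

/-- In a small-variation necklace with `x` occurrences of `m` and `y` occurrences of
`m+1`, `x ≥ y ≥ 1`, with `q = x/y`: every maximal run of `m` has length `⌊q⌋` or `⌈q⌉`,
and every maximal run of `m+1` has length `1`. -/
theorem stmt11 (k m x y : ℕ) (hk : 1 ≤ k) (hm : 1 ≤ m) (f : ZMod k → ℕ)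
    (hval : ∀ i, f i = m ∨ f i = m + 1)
    (hsv : SmallVar f)
    (hx : {i : ZMod k | f i = m}.ncard = x)
    (hy : {i : ZMod k | f i = m + 1}.ncard = y)
    (hyx : y ≤ x) (hy1 : 1 ≤ y) :
    (∀ i l, IsRun f m i l → l = x / y ∨ l = (x + y - 1) / y) ∧
    (∀ i l, IsRun f (m + 1) i l → l = 1) := by
  haveI : NeZero k := ⟨by omega⟩
  have hy0 : 0 < y := hy1
  -- card facts
  have hAcard : (Finset.univ.filter (fun i : ZMod k => f i = m)).card = x := by
    rw [← hx, Set.ncard_eq_toFinset_card']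
    congr 1
    ext i
    simp
  have hBeq : (Finset.univ.filter (fun i : ZMod k => ¬ f i = m)) =
      (Finset.univ.filter (fun i : ZMod k => f i = m + 1)) := by
    ext i
    rcases hval i with h | h <;> simp [h]
  have hBcard : (Finset.univ.filter (fun i : ZMod k => f i = m + 1)).card = y := by
    rw [← hy, Set.ncard_eq_toFinset_card']
    congr 1
    ext i
    simp
  have hxy : x + y = k := by
    have := Finset.card_filter_add_card_filter_not
      (s := (Finset.univ : Finset (ZMod k))) (p := fun i : ZMod k => f i = m)
    rw [hBeq, hAcard, hBcard, Finset.card_univ, ZMod.card] at this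
    exact this
  -- total sum
  have htot : ∑ i : ZMod k, f i = m * k + y := by
    rw [← Finset.sum_filter_add_sum_filter_not Finset.univ (fun i : ZMod k => f i = m)]
    rw [hBeq]
    rw [Finset.sum_congr rfl (fun i hi => (Finset.mem_filter.1 hi).2),
      Finset.sum_congr (s₂ := Finset.univ.filter (fun i : ZMod k => f i = m + 1)) rfl
        (fun i hi => (Finset.mem_filter.1 hi).2)]
    rw [Finset.sum_const, Finset.sum_const, hAcard, hBcard, smul_eq_mul, smul_eq_mul]
    have : x * m + y * (m + 1) = m * (x + y) + y := by ring
    rw [this, hxy]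
  constructor
  · -- runs of m
    rintro i l ⟨hl1, hrun, hprev, hnext⟩
    have hfprev : f (i - 1) = m + 1 := (hval _).resolve_left hprev
    have hfnext : f (i + (l : ZMod k)) = m + 1 := (hval _).resolve_left hnext
    have hA : cycSum f i l = m * l := by
      unfold cycSum
      rw [Finset.sum_congr rfl (fun j hj => hrun j (Finset.mem_range.1 hj))]
      rw [Finset.sum_const, Finset.card_range, smul_eq_mul, mul_comm]
    have hB : cycSum f (i - 1) (l + 2) = m * (l + 2) + 2 := by
      unfold cycSum
      rw [Finset.sum_range_succ', Finset.sum_range_succ]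
      have hmid : ∀ j ∈ Finset.range l,
          f (i - 1 + ((j + 1 : ℕ) : ZMod k)) = m := by
        intro j hj
        have e : i - 1 + ((j + 1 : ℕ) : ZMod k) = i + (j : ZMod k) := by
          push_cast
          ring
        rw [e]
        exact hrun j (Finset.mem_range.1 hj)
      rw [Finset.sum_congr rfl hmid]
      have e2 : i - 1 + ((l + 1 : ℕ) : ZMod k) = i + (l : ZMod k) := by
        push_cast
        ring
      rw [e2, hfnext]
      have e3 : i - 1 + ((0 : ℕ) : ZMod k) = i - 1 := by
        push_cast
        ring
      rw [e3, hfprev]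
      rw [Finset.sum_const, Finset.card_range, smul_eq_mul]
      ring
    -- upper bound: l * y ≤ x + y - 1
    have hub : ∀ i', cycSum f i' l ≤ m * l + 1 := by
      intro i'
      have h := hsv l hl1 i' i
      rw [abs_le] at h
      omega
    have hU := keyUB (fun i' => cycSum f i' l) i (m * l) (le_of_eq hA) hub
    rw [cycSum_total f l, htot] at hU
    have hU2 : l * y + 1 ≤ k := by
      have e : l * (m * k + y) = m * l * k + l * y := by ring
      have e2 : k * (m * l + 1) = m * l * k + k := by ring
      nlinarith
    -- lower bound: x + 1 ≤ (l + 1) * y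
    have hlb : ∀ i', m * (l + 2) + 1 ≤ cycSum f i' (l + 2) := by
      intro i'
      have h := hsv (l + 2) (by omega) i' (i - 1)
      rw [abs_le] at h
      omega
    have hL := keyLB (fun i' => cycSum f i' (l + 2)) (i - 1) (m * (l + 2) + 1)
      (by show m * (l + 2) + 1 + 1 ≤ cycSum f (i - 1) (l + 2); omega) hlb
    rw [cycSum_total f (l + 2), htot] at hL
    have hL2 : k + 1 ≤ (l + 2) * y := by
      have e : (l + 2) * (m * k + y) = m * (l + 2) * k + (l + 2) * y := by ring
      have e2 : k * (m * (l + 2) + 1) = m * (l + 2) * k + k := by ring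
      nlinarith
    -- convert to division facts
    have hdiv1 : l ≤ (x + y - 1) / y := by
      rw [Nat.le_div_iff_mul_le hy0]
      omega
    have hdiv2 : x / y ≤ l := by
      by_contra hcon
      push_neg at hcon
      have h1 : (l + 1) * y ≤ (x / y) * y := Nat.mul_le_mul_right y (by omega)
      have h2 : (x / y) * y ≤ x := Nat.div_mul_le_self x y
      have h3 : x + 1 ≤ (l + 1) * y := by
        have e : (l + 2) * y = (l + 1) * y + y := by ring
        omega
      omega
    have hdiv3 : x / y ≤ (x + y - 1) / y := Nat.div_le_div_right (by omega)
    have hdiv4 : (x + y - 1) / y ≤ x / y + 1 := by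
      have e : (x + y) / y = x / y + 1 := Nat.add_div_right x hy0
      calc (x + y - 1) / y ≤ (x + y) / y := Nat.div_le_div_right (by omega)
        _ = x / y + 1 := e
    omega
  · -- runs of m+1
    rintro i l ⟨hl1, hrun, hprev, hnext⟩
    by_contra hne
    have hl2 : 2 ≤ l := by omega
    have hii : cycSum f i 2 = 2 * m + 2 := by
      unfold cycSum
      rw [Finset.sum_range_succ, Finset.sum_range_succ, Finset.sum_range_zero]
      have h0 := hrun 0 (by omega)
      have h1 := hrun 1 (by omega)
      simp only [Nat.cast_zero, Nat.cast_one, add_zero] at h0 h1 ⊢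
      omega
    have hlb : ∀ i', 2 * m + 1 ≤ cycSum f i' 2 := by
      intro i'
      have h := hsv 2 (by omega) i' i
      rw [abs_le] at h
      omega
    have hL : k * (2 * m + 1) + 1 ≤ ∑ i' : ZMod k, cycSum f i' 2 :=
      keyLB (fun i' => cycSum f i' 2) i (2 * m + 1)
        (by show 2 * m + 1 + 1 ≤ cycSum f i 2; omega) hlb
    rw [cycSum_total f 2, htot] at hL
    have hfin : k + 1 ≤ 2 * y := by
      have e : 2 * (m * k + y) = 2 * m * k + 2 * y := by ring
      have e2 : k * (2 * m + 1) = 2 * m * k + k := by ring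
      linarith
    omega
end

section
/- For every m ≥ 1 and x, y ≥ 0 with x + y ≥ 1, there exists a unique necklace with small variation containing exactly x occurrences of m and y occurrences of m+1 (and no other values). -/
lemma aux_mono {y k : ℕ} {a b : ℕ} (h : a ≤ b) : a * y / k ≤ b * y / k :=
  Nat.div_le_div_right (Nat.mul_le_mul_right _ h)

lemma aux_add {y k : ℕ} (hk : 0 < k) (a b : ℕ) :
    ∃ e, e ≤ 1 ∧ (a + b) * y / k = a * y / k + b * y / k + e := by
  rw [add_mul, Nat.add_div hk]
  exact ⟨_, by split <;> omega, rfl⟩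

lemma aux_per {y k : ℕ} (hk : 0 < k) (n : ℕ) : (n + k) * y / k = n * y / k + y := by
  rw [add_mul, mul_comm k y, Nat.add_mul_div_right _ _ hk]

lemma aux_tele {y k : ℕ} (n s : ℕ) :
    ∑ j ∈ Finset.range s, ((n + j + 1) * y / k - (n + j) * y / k)
      = (n + s) * y / k - n * y / k := by
  induction s with
  | zero => simp
  | succ s ih =>
    rw [Finset.sum_range_succ, ih]
    have h1 : n * y / k ≤ (n + s) * y / k := aux_mono (by omega)
    have h2 : (n + s) * y / k ≤ (n + s + 1) * y / k := aux_mono (by omega)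
    have h3 : n + (s + 1) = n + s + 1 := rfl
    rw [h3]
    omega

lemma aux_dd_le {y k : ℕ} (hk : 0 < k) (hy : y ≤ k) (n : ℕ) :
    (n + 1) * y / k ≤ n * y / k + 1 := by
  have : (n + 1) * y ≤ n * y + k := by nlinarith
  calc (n + 1) * y / k ≤ (n * y + k) / k := Nat.div_le_div_right this
    _ = n * y / k + 1 := Nat.add_div_right _ hk

lemma sum_zmod {k : ℕ} [NeZero k] (h : ZMod k → ℕ) :
    ∑ j ∈ Finset.range k, h (j : ZMod k) = ∑ i, h i := by
  exact Finset.sum_nbij' (fun j => (j : ZMod k)) (fun i => i.val)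
    (fun j _ => Finset.mem_univ _)
    (fun i _ => Finset.mem_range.2 (ZMod.val_lt i))
    (fun j hj => ZMod.val_natCast_of_lt (Finset.mem_range.1 hj))
    (fun i _ => ZMod.natCast_rightInverse i)
    (fun j _ => rfl)

lemma aux_dd_per {y k : ℕ} (hk : 0 < k) :
    Function.Periodic (fun n => (n + 1) * y / k - n * y / k) k := by
  intro n
  simp only
  have h1 : (n + k + 1) * y / k = (n + 1) * y / k + y := by
    have : n + k + 1 = (n + 1) + k := by omega
    rw [this, aux_per hk]
  have h2 : (n + k) * y / k = n * y / k + y := aux_per hk n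
  omega

lemma aux_val_add {k : ℕ} [NeZero k] (i : ZMod k) (s : ℕ) :
    (i + (s : ZMod k)).val = (i.val + s) % k := by
  rw [ZMod.val_add, ZMod.val_natCast, Nat.add_mod_mod]

lemma cyc_formula {k y m : ℕ} [NeZero k] (i : ZMod k) (s : ℕ) :
    cycSum (fun i => m + ((i.val + 1) * y / k - i.val * y / k)) i s
      = m * s + ((i.val + s) * y / k - i.val * y / k) := by
  have hk : 0 < k := Nat.pos_of_ne_zero (NeZero.ne k)
  induction s with
  | zero => simp [cycSum]
  | succ s ih =>
    simp only [cycSum] at ih ⊢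
    rw [Finset.sum_range_succ, ih]
    have hv : (i + (s : ZMod k)).val % k = (i.val + s) % k := by
      rw [aux_val_add]; simp [Nat.mod_mod]
    have hdd : ((i + (s : ZMod k)).val + 1) * y / k - (i + (s : ZMod k)).val * y / k
        = ((i.val + s) + 1) * y / k - (i.val + s) * y / k := by
      have e1 := (aux_dd_per (y := y) hk).map_mod_nat (i + (s : ZMod k)).val
      have e2 := (aux_dd_per (y := y) hk).map_mod_nat (i.val + s)
      rw [← e1, ← e2, hv]
    rw [hdd]
    clear ih hv hdd
    have h1 : i.val * y / k ≤ (i.val + s) * y / k := aux_mono (by omega)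
    have h2 : (i.val + s) * y / k ≤ (i.val + s + 1) * y / k := aux_mono (by omega)
    have h3 : i.val + (s + 1) = i.val + s + 1 := rfl
    rw [h3]
    set P := i.val * y / k with hP
    set Q1 := (i.val + s) * y / k with hQ1
    set Q2 := (i.val + s + 1) * y / k with hQ2
    clear_value P Q1 Q2
    have hms : m * (s + 1) = m * s + m := by ring
    omega

lemma smallvar_f {k y m : ℕ} [NeZero k] :
    SmallVar (fun i : ZMod k => m + ((i.val + 1) * y / k - i.val * y / k)) := by
  have hk : 0 < k := Nat.pos_of_ne_zero (NeZero.ne k)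
  intro s hs i₁ i₂
  rw [cyc_formula, cyc_formula]
  obtain ⟨e₁, he₁, H₁⟩ := aux_add (y := y) hk i₁.val s
  obtain ⟨e₂, he₂, H₂⟩ := aux_add (y := y) hk i₂.val s
  set A1 := (i₁.val + s) * y / k
  set B1 := i₁.val * y / k
  set A2 := (i₂.val + s) * y / k
  set B2 := i₂.val * y / k
  set C := s * y / k
  clear_value A1 B1 A2 B2 C
  rw [abs_le]
  omega

lemma dd_le {k y : ℕ} (hk : 0 < k) (hy : y ≤ k) (n : ℕ) :
    (n + 1) * y / k - n * y / k ≤ 1 := by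
  have := aux_dd_le hk hy n
  omega

lemma count_f1 {k y m : ℕ} [NeZero k] (hy : y ≤ k) :
    (Finset.univ.filter
      (fun i : ZMod k => m + ((i.val + 1) * y / k - i.val * y / k) = m + 1)).card = y := by
  have hk : 0 < k := Nat.pos_of_ne_zero (NeZero.ne k)
  rw [Finset.card_filter]
  have h1 : ∀ i : ZMod k,
      (if m + ((i.val + 1) * y / k - i.val * y / k) = m + 1 then 1 else 0)
        = (i.val + 1) * y / k - i.val * y / k := by
    intro i
    have := dd_le hk hy i.val
    split_ifs with h <;> omega
  rw [Finset.sum_congr rfl (fun i _ => h1 i)]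
  rw [← sum_zmod (fun i : ZMod k => (i.val + 1) * y / k - i.val * y / k)]
  have h2 : ∀ j ∈ Finset.range k,
      (((j : ZMod k)).val + 1) * y / k - ((j : ZMod k)).val * y / k
        = (j + 1) * y / k - j * y / k := by
    intro j hj
    rw [ZMod.val_natCast_of_lt (Finset.mem_range.1 hj)]
  rw [Finset.sum_congr rfl h2]
  have h := aux_tele (y := y) (k := k) 0 k
  simp only [Nat.zero_add, zero_add] at h
  rw [h, Nat.zero_mul, Nat.zero_div, Nat.mul_div_cancel_left _ hk]
  omega

lemma count_f0 {k y m : ℕ} [NeZero k] (hy : y ≤ k) :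
    (Finset.univ.filter
      (fun i : ZMod k => m + ((i.val + 1) * y / k - i.val * y / k) = m)).card = k - y := by
  have hk : 0 < k := Nat.pos_of_ne_zero (NeZero.ne k)
  have heq : (Finset.univ.filter
      (fun i : ZMod k => m + ((i.val + 1) * y / k - i.val * y / k) = m))
      = (Finset.univ.filter
      (fun i : ZMod k => ¬ (m + ((i.val + 1) * y / k - i.val * y / k) = m + 1))) := by
    apply Finset.filter_congr
    intro i _
    have := dd_le hk hy i.val
    constructor <;> intro h <;> omega
  rw [heq]
  have := Finset.card_filter_add_card_filter_not
    (s := (Finset.univ : Finset (ZMod k)))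
    (fun i : ZMod k => m + ((i.val + 1) * y / k - i.val * y / k) = m + 1)
  rw [count_f1 hy] at this
  rw [Finset.card_univ, ZMod.card] at this
  omega

def Bsum {k : ℕ} (g : ZMod k → ℕ) (n : ℕ) : ℕ := ∑ j ∈ Finset.range n, g (j : ZMod k)

lemma Bsum_add {k : ℕ} (g : ZMod k → ℕ) (n s : ℕ) :
    Bsum g (n + s) = Bsum g n + cycSum g (n : ZMod k) s := by
  induction s with
  | zero => simp [cycSum]
  | succ s ih =>
    have h : n + (s + 1) = (n + s) + 1 := rfl
    rw [h, Bsum, Finset.sum_range_succ, ← Bsum, ih]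
    simp only [cycSum]
    rw [Finset.sum_range_succ]
    have h2 : ((n + s : ℕ) : ZMod k) = (n : ZMod k) + (s : ZMod k) := by push_cast; ring
    rw [h2, add_assoc]

lemma cyc_full {k : ℕ} [NeZero k] (g : ZMod k → ℕ) (c : ZMod k) :
    cycSum g c k = ∑ i, g i := by
  rw [cycSum]
  rw [sum_zmod (fun i => g (c + i))]
  simpa using Equiv.sum_comp (Equiv.addLeft c) g

lemma unique_g {k y m : ℕ} [NeZero k] (hy : y ≤ k) (g : ZMod k → ℕ)
    (hsum : ∑ i, g i = m * k + y) (hsv : SmallVar g) :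
    ∃ c : ZMod k, ∀ i, g i
      = m + (((i + c).val + 1) * y / k - (i + c).val * y / k) := by
  have hk : 0 < k := Nat.pos_of_ne_zero (NeZero.ne k)
  -- total of all cyclic sums
  have hcycsum : ∀ s : ℕ, ∑ i, cycSum g i s = s * (m * k + y) := by
    intro s
    simp only [cycSum]
    rw [Finset.sum_comm]
    have hin : ∀ j ∈ Finset.range s, ∑ i : ZMod k, g (i + (j : ZMod k)) = m * k + y := by
      intro j _
      rw [← hsum]
      simpa using Equiv.sum_comp (Equiv.addRight ((j : ZMod k))) g
    rw [Finset.sum_congr rfl hin, Finset.sum_const, Finset.card_range, smul_eq_mul]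
  -- lower bound for all starting points
  have hlow : ∀ s : ℕ, 1 ≤ s → ∀ i : ZMod k, m * s + s * y / k ≤ cycSum g i s := by
    intro s hs i
    by_contra hcon
    push_neg at hcon
    have hub : ∀ i' : ZMod k, cycSum g i' s ≤ m * s + s * y / k := by
      intro i'
      have h := hsv s hs i' i
      rw [abs_le] at h
      set M := m * s
      set Q := s * y / k
      clear_value M Q
      omega
    have hlt : ∑ i', cycSum g i' s < ∑ _i' : ZMod k, (m * s + s * y / k) := by
      apply Finset.sum_lt_sum (fun i' _ => hub i')
      exact ⟨i, Finset.mem_univ i, hcon⟩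
    rw [Finset.sum_const, Finset.card_univ, ZMod.card, hcycsum, smul_eq_mul] at hlt
    have hd : (s * y / k) * k ≤ s * y := Nat.div_mul_le_self _ _
    have hle : k * (m * s + s * y / k) ≤ s * (m * k + y) := by nlinarith
    omega
  -- maximum of the discrepancy function
  obtain ⟨n₀, _, hmax⟩ := Finset.exists_max_image (Finset.range k)
    (fun n => (k : ℤ) * Bsum g n - n * (m * k + y)) ⟨0, Finset.mem_range.2 hk⟩
  have hBk : ∀ n, Bsum g (n + k) = Bsum g n + (m * k + y) := by
    intro n
    rw [Bsum_add, cyc_full, hsum]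
  have hper : Function.Periodic (fun n => (k : ℤ) * Bsum g n - n * (m * k + y)) k := by
    intro n
    simp only
    rw [hBk]
    push_cast
    ring
  have hmax' : ∀ n : ℕ, (k : ℤ) * Bsum g n - n * (m * k + y)
      ≤ (k : ℤ) * Bsum g n₀ - n₀ * (m * k + y) := by
    intro n
    have h1 := hper.map_mod_nat n
    have h2 := hmax (n % k) (Finset.mem_range.2 (Nat.mod_lt _ hk))
    rw [h1] at h2
    exact h2
  have hup : ∀ s : ℕ, cycSum g (n₀ : ZMod k) s ≤ m * s + s * y / k := by
    intro s
    have h := hmax' (n₀ + s)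
    have hb := Bsum_add g n₀ s
    have h2 : (k : ℤ) * (cycSum g (n₀ : ZMod k) s) ≤ s * (m * k + y) := by
      rw [hb] at h
      push_cast at h
      linarith
    have h3 : k * cycSum g (n₀ : ZMod k) s ≤ s * (m * k + y) := by exact_mod_cast h2
    have h5 : k * cycSum g (n₀ : ZMod k) s < k * (m * s + s * y / k + 1) := by
      have hdm := Nat.div_add_mod (s * y) k
      have hml : (s * y) % k < k := Nat.mod_lt _ hk
      nlinarith
    have := Nat.lt_of_mul_lt_mul_left h5
    omega
  have hexact : ∀ s : ℕ, cycSum g (n₀ : ZMod k) s = m * s + s * y / k := by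
    intro s
    rcases Nat.eq_zero_or_pos s with rfl | hs
    · simp [cycSum]
    · exact le_antisymm (hup s) (hlow s hs _)
  -- conclusion
  refine ⟨-(n₀ : ZMod k), fun i => ?_⟩
  set t := (i + -(n₀ : ZMod k)).val with ht
  have hi : i = ((n₀ + t : ℕ) : ZMod k) := by
    have h1 : ((t : ℕ) : ZMod k) = i + -(n₀ : ZMod k) := ZMod.natCast_rightInverse _
    push_cast
    rw [h1]
    ring
  have e1 : Bsum g (n₀ + t + 1) = Bsum g (n₀ + t) + g ((n₀ + t : ℕ) : ZMod k) :=
    Finset.sum_range_succ _ _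
  have e2 : Bsum g (n₀ + t + 1) = Bsum g n₀ + (m * (t + 1) + (t + 1) * y / k) := by
    rw [show n₀ + t + 1 = n₀ + (t + 1) from rfl, Bsum_add, hexact]
  have e3 : Bsum g (n₀ + t) = Bsum g n₀ + (m * t + t * y / k) := by
    rw [Bsum_add, hexact]
  have hmono : t * y / k ≤ (t + 1) * y / k := aux_mono (by omega)
  have hm' : m * (t + 1) = m * t + m := by ring
  rw [hi]
  set A := (t + 1) * y / k
  set B := t * y / k
  clear_value A B
  omega

lemma gsum_of_counts {k y m x : ℕ} [NeZero k] [Fintype (ZMod k)] (hk : x + y = k)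
    (g : ZMod k → ℕ) (hg1 : ∀ i, g i = m ∨ g i = m + 1)
    (hgx : {i : ZMod k | g i = m}.ncard = x)
    (hgy : {i : ZMod k | g i = m + 1}.ncard = y) :
    ∑ i, g i = m * k + y := by
  classical
  have hA : (Finset.univ.filter (fun i : ZMod k => g i = m)).card = x := by
    have h : {i : ZMod k | g i = m} = ↑(Finset.univ.filter (fun i : ZMod k => g i = m)) := by
      ext i; simp
    rw [h, Set.ncard_coe_finset] at hgx
    exact hgx
  have hB : (Finset.univ.filter (fun i : ZMod k => g i = m + 1)).card = y := by
    have h : {i : ZMod k | g i = m + 1}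
        = ↑(Finset.univ.filter (fun i : ZMod k => g i = m + 1)) := by
      ext i; simp
    rw [h, Set.ncard_coe_finset] at hgy
    exact hgy
  have hfil : Finset.univ.filter (fun i : ZMod k => ¬ g i = m)
      = Finset.univ.filter (fun i : ZMod k => g i = m + 1) := by
    ext i
    simp only [Finset.mem_filter, Finset.mem_univ, true_and]
    have := hg1 i
    constructor <;> intro h <;> omega
  rw [← Finset.sum_filter_add_sum_filter_not Finset.univ (fun i : ZMod k => g i = m)]
  have h1 : ∑ i ∈ Finset.univ.filter (fun i : ZMod k => g i = m), g i = x * m := by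
    rw [Finset.sum_congr rfl (fun i hi => (Finset.mem_filter.1 hi).2), Finset.sum_const,
      hA, smul_eq_mul]
  have h2 : ∑ i ∈ Finset.univ.filter (fun i : ZMod k => ¬ g i = m), g i = y * (m + 1) := by
    rw [hfil, Finset.sum_congr rfl (fun i hi => (Finset.mem_filter.1 hi).2), Finset.sum_const,
      hB, smul_eq_mul]
  rw [h1, h2, ← hk]
  ring

/-- For every `m ≥ 1` and `x, y ≥ 0` with `x + y ≥ 1` there exists a small-variation
necklace with exactly `x` occurrences of `m` and `y` occurrences of `m+1` (and no other
values), and it is unique as a necklace, i.e. unique up to cyclic rotation. -/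
theorem stmt12 (m x y : ℕ) (hm : 1 ≤ m) (hxy : 1 ≤ x + y) :
    ∃ f : ZMod (x + y) → ℕ,
      ((∀ i, f i = m ∨ f i = m + 1) ∧
        {i : ZMod (x + y) | f i = m}.ncard = x ∧
        {i : ZMod (x + y) | f i = m + 1}.ncard = y ∧
        SmallVar f) ∧
      ∀ g : ZMod (x + y) → ℕ,
        ((∀ i, g i = m ∨ g i = m + 1) ∧
          {i : ZMod (x + y) | g i = m}.ncard = x ∧
          {i : ZMod (x + y) | g i = m + 1}.ncard = y ∧
          SmallVar g) →
        ∃ c : ZMod (x + y), ∀ i, g i = f (i + c) := by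
  classical
  haveI : NeZero (x + y) := ⟨by omega⟩
  set k := x + y with hkdef
  have hk : 0 < k := by omega
  have hy : y ≤ k := by omega
  refine ⟨fun i => m + ((i.val + 1) * y / k - i.val * y / k), ⟨?_, ?_, ?_, ?_⟩, ?_⟩
  · intro i
    beta_reduce
    have := dd_le hk hy i.val
    omega
  · beta_reduce
    have h : {i : ZMod k | m + ((i.val + 1) * y / k - i.val * y / k) = m}
        = ↑(Finset.univ.filter
            (fun i : ZMod k => m + ((i.val + 1) * y / k - i.val * y / k) = m)) := by
      ext i; simp
    rw [h, Set.ncard_coe_finset, count_f0 hy]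
    omega
  · beta_reduce
    have h : {i : ZMod k | m + ((i.val + 1) * y / k - i.val * y / k) = m + 1}
        = ↑(Finset.univ.filter
            (fun i : ZMod k => m + ((i.val + 1) * y / k - i.val * y / k) = m + 1)) := by
      ext i; simp
    rw [h, Set.ncard_coe_finset, count_f1 hy]
  · exact smallvar_f
  · rintro g ⟨hg1, hgx, hgy, hgsv⟩
    have hsum : ∑ i, g i = m * k + y := gsum_of_counts rfl g hg1 hgx hgy
    obtain ⟨c, hc⟩ := unique_g hy g hsum hgsv
    exact ⟨c, hc⟩
end

section
/- Let m, x, y ≥ 1, let w be a necklace with entries in {m, m+1} having profile (m, x, y) (i.e., x occurrences of m and y occurrences of m+1) and small variation, and let A(w) be the derived necklace obtained by recording run-lengths of the majority value separated by the minority value. Then A(w) has profile (m', x', y') with m' = ⌊max(x,y)/min(x,y)⌋, x' = min(x,y) - max(x,y) + min(x,y)·m', y' = max(x,y) - min(x,y)·m', and min(x', y') < min(x, y). -/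
def ZeroRun {k : ℕ} (g : ZMod k → ℕ) (i : ZMod k) (l : ℕ) : Prop :=
  1 ≤ l ∧ (∀ j < l, g (i + (j : ZMod k)) = 0) ∧ g (i - 1) = 1 ∧ g (i + (l : ZMod k)) = 1

open Finset

section Key

variable {k : ℕ} [NeZero k] {g : ZMod k → ℕ}

lemma sum_shift (g : ZMod k → ℕ) (c : ZMod k) :
    ∑ i : ZMod k, g (i + c) = ∑ i : ZMod k, g i :=
  Equiv.sum_comp (Equiv.addRight c) g

lemma sum_cycSum (g : ZMod k → ℕ) (s : ℕ) :
    ∑ i : ZMod k, cycSum g i s = s * ∑ i : ZMod k, g i := by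
  unfold cycSum
  rw [Finset.sum_comm]
  simp [sum_shift, Finset.sum_const, mul_comm]

lemma natCast_val (a : ZMod k) : ((a.val : ℕ) : ZMod k) = a := by
  simp [ZMod.natCast_val, ZMod.cast_id]

/-- forward search for a 1 -/
lemma exists_one_fwd (hone : ∃ i₀, g i₀ = 1) (i : ZMod k) (hz : g i = 0) :
    ∃ l, g (i + ((l + 1 : ℕ) : ZMod k)) = 1 := by
  obtain ⟨i₀, h1⟩ := hone
  have hv : ((i₀ - i).val : ZMod k) = i₀ - i := natCast_val _
  have hvne : (i₀ - i).val ≠ 0 := by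
    intro h0
    rw [h0] at hv
    have : i₀ = i := by
      have : i₀ - i = 0 := by rw [← hv]; simp
      linear_combination this
    rw [this] at h1; omega
  refine ⟨(i₀ - i).val - 1, ?_⟩
  have : (i₀ - i).val - 1 + 1 = (i₀ - i).val := by omega
  rw [this, hv]
  simpa using h1

/-- backward search for a 1 -/
lemma exists_one_bwd (hone : ∃ i₀, g i₀ = 1) (i : ZMod k) (hz : g i = 0) :
    ∃ l, g (i - ((l + 1 : ℕ) : ZMod k)) = 1 := by
  obtain ⟨i₀, h1⟩ := hone
  have hv : ((i - i₀).val : ZMod k) = i - i₀ := natCast_val _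
  have hvne : (i - i₀).val ≠ 0 := by
    intro h0
    rw [h0] at hv
    have : i = i₀ := by
      have : i - i₀ = 0 := by rw [← hv]; simp
      linear_combination this
    rw [this] at hz; omega
  refine ⟨(i - i₀).val - 1, ?_⟩
  have : (i - i₀).val - 1 + 1 = (i - i₀).val := by omega
  rw [this, hv]
  simpa using h1

end Key

section Key2

variable {k : ℕ} [NeZero k]

theorem key (X Y : ℕ) (hX : 1 ≤ X) (hXY : X ≤ Y) (hk : k = X + Y)
    (g : ZMod k → ℕ)
    (h01 : ∀ i, g i ≤ 1)
    (hcard : {i : ZMod k | g i = 1}.ncard = X)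
    (hbal : ∀ s, 1 ≤ s → ∀ i₁ i₂ : ZMod k, cycSum g i₁ s ≤ cycSum g i₂ s + 1) :
    (∀ i l, ZeroRun g i l → l = Y / X ∨ l = Y / X + 1) ∧
    {i : ZMod k | ZeroRun g i (Y / X)}.ncard = X + X * (Y / X) - Y ∧
    {i : ZMod k | ZeroRun g i (Y / X + 1)}.ncard = Y - X * (Y / X) := by
  classical
  have hkcard : Fintype.card (ZMod k) = k := ZMod.card k
  have hcard' : (univ.filter fun i => g i = 1).card = X := by
    rw [← hcard]; simp [Set.ncard_eq_toFinset_card', Set.toFinset_setOf]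
  have htot : ∑ i : ZMod k, g i = X := by
    rw [← hcard', Finset.card_filter]
    refine Finset.sum_congr rfl fun i _ => ?_
    have := h01 i
    split_ifs with h <;> omega
  have hones : ∃ i₀, g i₀ = 1 := by
    have hne : (univ.filter fun i => g i = 1).Nonempty := Finset.card_pos.mp (by omega)
    obtain ⟨i, hi⟩ := hne
    exact ⟨i, (Finset.mem_filter.mp hi).2⟩
  have hcardZ : (univ.filter fun i => g i = 0).card = Y := by
    have h2 := Finset.card_filter_add_card_filter_not
      (s := (univ : Finset (ZMod k))) (p := fun i => g i = 0)
    have h3 : (univ.filter fun i => ¬ g i = 0) = (univ.filter fun i => g i = 1) := by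
      apply Finset.filter_congr
      intro i _
      have := h01 i
      constructor <;> (intro h; omega)
    rw [h3, hcard', Finset.card_univ, hkcard] at h2
    omega
  have hsum_win : ∀ s : ℕ, ∑ i : ZMod k, cycSum g i s = s * X := by
    intro s; rw [sum_cycSum, htot]
  have hc2 : ∀ i : ZMod k, cycSum g i 2 = g i + g (i + 1) := by
    intro i
    simp [cycSum, Finset.sum_range_succ]
  have hiso : ∀ i, g i = 1 → g (i + 1) = 0 := by
    intro i h1
    by_contra hne
    have h1' : g (i + 1) = 1 := by have := h01 (i + 1); omega
    have h2 : cycSum g i 2 = 2 := by rw [hc2]; omega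
    have hge : ∀ j, 1 ≤ cycSum g j 2 := fun j => by
      have := hbal 2 one_le_two i j; omega
    have hlt : ∑ _j : ZMod k, (1 : ℕ) < ∑ j : ZMod k, cycSum g j 2 :=
      Finset.sum_lt_sum (fun j _ => hge j) ⟨i, Finset.mem_univ i, by omega⟩
    rw [hsum_win 2] at hlt
    simp [Finset.card_univ, hkcard] at hlt
    omega
  -- run length function
  have hexF : ∀ i, g i = 0 → ∃ l, g (i + ((l + 1 : ℕ) : ZMod k)) = 1 :=
    fun i h => exists_one_fwd hones i h
  set L : ZMod k → ℕ := fun i => if h : g i = 0 then Nat.find (hexF i h) + 1 else 1 with hLdef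
  have hL1 : ∀ i, 1 ≤ L i := by
    intro i; simp only [hLdef]; split <;> omega
  have hLone : ∀ i, g i = 0 → g (i + ((L i : ℕ) : ZMod k)) = 1 := by
    intro i h
    simp only [hLdef, dif_pos h]
    exact Nat.find_spec (hexF i h)
  have hLzeros : ∀ i, g i = 0 → ∀ j < L i, g (i + (j : ZMod k)) = 0 := by
    intro i h j hj
    simp only [hLdef, dif_pos h] at hj
    match j, hj with
    | 0, _ => simpa using h
    | t + 1, hj =>
      have h2 := Nat.find_min (hexF i h) (show t < Nat.find (hexF i h) by omega)
      have := h01 (i + ((t + 1 : ℕ) : ZMod k))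
      omega
  have hLlt : ∀ i, g i = 0 → L i < k := by
    intro i h
    by_contra hge
    obtain ⟨i₀, h1⟩ := hones
    have hv : (((i₀ - i).val : ℕ) : ZMod k) = i₀ - i := natCast_val _
    have hvl : (i₀ - i).val < k := ZMod.val_lt _
    have h0 := hLzeros i h (i₀ - i).val (by omega)
    rw [hv] at h0
    rw [show i + (i₀ - i) = i₀ by ring] at h0
    omega
  have hrunL : ∀ i, g i = 0 → g (i - 1) = 1 → ZeroRun g i (L i) :=
    fun i h h' => ⟨hL1 i, hLzeros i h, h', hLone i h⟩
  have huniq : ∀ i l, ZeroRun g i l → g i = 0 ∧ g (i - 1) = 1 ∧ l = L i := by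
    rintro i l ⟨h1, hz, hm, he⟩
    have hgi : g i = 0 := by have := hz 0 h1; simpa using this
    refine ⟨hgi, hm, ?_⟩
    rcases lt_trichotomy l (L i) with h | h | h
    · have := hLzeros i hgi l h; omega
    · exact h
    · have h2 := hz (L i) h
      have h3 := hLone i hgi
      omega
  set R : Finset (ZMod k) := univ.filter (fun i => g i = 0 ∧ g (i - 1) = 1) with hRdef
  have hRcard : R.card = X := by
    rw [← hcard']
    apply Finset.card_bij (fun i _ => i - 1)
    · intro a ha
      simp only [hRdef, Finset.mem_filter, Finset.mem_univ, true_and] at ha ⊢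
      exact ha.2
    · intro a _ b _ hab
      linear_combination hab
    · intro b hb
      simp only [Finset.mem_filter, Finset.mem_univ, true_and] at hb
      refine ⟨b + 1, ?_, by ring⟩
      simp only [hRdef, Finset.mem_filter, Finset.mem_univ, true_and]
      exact ⟨hiso b hb, by simpa using hb⟩
  set Bl : ZMod k → Finset (ZMod k) :=
    fun i => (Finset.range (L i)).image (fun j : ℕ => i + (j : ZMod k)) with hBldef
  have hBlcard : ∀ i, g i = 0 → (Bl i).card = L i := by
    intro i h
    simp only [hBldef]
    rw [Finset.card_image_of_injOn, Finset.card_range]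
    intro a ha b hb hab
    simp only [Finset.coe_range, Set.mem_Iio] at ha hb
    have ha' : a < k := lt_trans ha (hLlt i h)
    have hb' : b < k := lt_trans hb (hLlt i h)
    have h2 : ((a : ℕ) : ZMod k) = ((b : ℕ) : ZMod k) := by
      have := hab
      dsimp at this
      linear_combination this
    have := congrArg ZMod.val h2
    rwa [ZMod.val_cast_of_lt ha', ZMod.val_cast_of_lt hb'] at this
  have hcover : (univ.filter fun i => g i = 0) = R.biUnion Bl := by
    apply Finset.ext
    intro a
    simp only [Finset.mem_biUnion, hRdef, hBldef, Finset.mem_filter, Finset.mem_univ, true_and,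
      Finset.mem_image, Finset.mem_range]
    constructor
    · intro ha
      have hexB := exists_one_bwd hones a ha
      set d : ℕ := Nat.find hexB + 1 with hd
      have hdspec : g (a - ((d : ℕ) : ZMod k)) = 1 := Nat.find_spec hexB
      have hdmin : ∀ t, 1 ≤ t → t < d → g (a - ((t : ℕ) : ZMod k)) = 0 := by
        intro t ht1 htd
        match t, ht1 with
        | s + 1, _ =>
          have h2 := Nat.find_min hexB (show s < Nat.find hexB by omega)
          have := h01 (a - ((s + 1 : ℕ) : ZMod k))
          omega
      set i : ZMod k := a - ((d - 1 : ℕ) : ZMod k) with hidef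
      have hcast1 : ((d - 1 : ℕ) : ZMod k) = ((d : ℕ) : ZMod k) - 1 := by
        push_cast [Nat.cast_sub (show 1 ≤ d by omega)]
        ring
      have hgi : g i = 0 := by
        rcases Nat.eq_or_lt_of_le (show 1 ≤ d by omega) with h1 | h1
        · rw [hidef, show d - 1 = 0 by omega]
          simpa using ha
        · rw [hidef]
          exact hdmin (d - 1) (by omega) (by omega)
      have hgi1 : g (i - 1) = 1 := by
        rw [hidef, hcast1, show a - (((d : ℕ) : ZMod k) - 1) - 1 = a - ((d : ℕ) : ZMod k) by ring]
        exact hdspec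
      refine ⟨i, ⟨hgi, hgi1⟩, d - 1, ?_, by rw [hidef]; ring⟩
      by_contra hge
      have hLle : L i ≤ d - 1 := by omega
      have h1 := hLone i hgi
      have hn1 : 1 ≤ L i := hL1 i
      generalize hn : L i = n at hLle h1 hn1
      have hcast2 : i + ((n : ℕ) : ZMod k) = a - ((d - 1 - n : ℕ) : ZMod k) := by
        rw [hidef]
        push_cast [Nat.cast_sub hLle, Nat.cast_sub (show 1 ≤ d by omega)]
        ring
      rw [hcast2] at h1
      rcases Nat.eq_zero_or_pos (d - 1 - n) with h0 | h0
      · rw [h0] at h1; simp at h1; omega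
      · have := hdmin (d - 1 - n) h0 (by omega)
        omega
    · rintro ⟨i, ⟨hgi, _⟩, j, hj, rfl⟩
      exact hLzeros i hgi j hj
  have hstep : ∀ i₁ i₂ : ZMod k, g i₁ = 0 → g (i₂ - 1) = 1 → ∀ s : ℕ, 1 ≤ s →
      s - 1 < L i₁ → ((s : ℕ) : ZMod k) = i₂ - i₁ → False := by
    intro i₁ i₂ h1 h2 s hs hsl hcast
    have h3 := hLzeros i₁ h1 (s - 1) hsl
    have he : i₁ + ((s - 1 : ℕ) : ZMod k) = i₂ - 1 := by
      push_cast [Nat.cast_sub hs]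
      rw [hcast]; ring
    rw [he] at h3; omega
  have hdisj : ∀ i₁ ∈ R, ∀ i₂ ∈ R, i₁ ≠ i₂ → Disjoint (Bl i₁) (Bl i₂) := by
    intro i₁ h₁ i₂ h₂ hne
    rw [Finset.disjoint_left]
    intro a ha1 ha2
    simp only [hBldef, Finset.mem_image, Finset.mem_range] at ha1 ha2
    obtain ⟨j₁, hj₁, he₁⟩ := ha1
    obtain ⟨j₂, hj₂, he₂⟩ := ha2
    simp only [hRdef, Finset.mem_filter, Finset.mem_univ, true_and] at h₁ h₂
    obtain ⟨t, htdef⟩ : ∃ t : ℕ, t = (i₂ - i₁).val := ⟨_, rfl⟩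
    have ht : ((t : ℕ) : ZMod k) = i₂ - i₁ := by rw [htdef]; exact natCast_val _
    have htlt : t < k := by rw [htdef]; exact ZMod.val_lt _
    have htne : t ≠ 0 := by
      intro h0
      apply hne
      have h4 : i₂ - i₁ = 0 := by rw [← ht, h0]; simp
      linear_combination -h4
    have hcast : ((j₁ : ℕ) : ZMod k) = ((t + j₂ : ℕ) : ZMod k) := by
      push_cast
      rw [ht]
      linear_combination he₁ - he₂
    have hmod : j₁ % k = (t + j₂) % k := (ZMod.natCast_eq_natCast_iff _ _ _).mp hcast
    have hj₁k : j₁ < k := lt_trans hj₁ (hLlt i₁ h₁.1)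
    have hj₂k : j₂ < k := lt_trans hj₂ (hLlt i₂ h₂.1)
    have hk0 : 0 < k := by omega
    have hdisj2 : j₁ = t + j₂ ∨ j₂ = (k - t) + j₁ := by
      rcases lt_or_ge (t + j₂) k with hlt2 | hge2
      · left
        rwa [Nat.mod_eq_of_lt hj₁k, Nat.mod_eq_of_lt hlt2] at hmod
      · right
        have h5 : (t + j₂) % k = t + j₂ - k := by
          rw [Nat.mod_eq_sub_mod hge2, Nat.mod_eq_of_lt (by omega)]
        rw [Nat.mod_eq_of_lt hj₁k, h5] at hmod
        omega
    rcases hdisj2 with hc | hc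
    · exact hstep i₁ i₂ h₁.1 h₂.2 t (by omega) (by omega) ht
    · have ht' : ((k - t : ℕ) : ZMod k) = i₁ - i₂ := by
        push_cast [Nat.cast_sub (le_of_lt htlt)]
        rw [ht, ZMod.natCast_self]
        ring
      exact hstep i₂ i₁ h₂.1 h₁.2 (k - t) (by omega) (by omega) ht'
  have hsumL : ∑ i ∈ R, L i = Y := by
    rw [← hcardZ, hcover, Finset.card_biUnion hdisj]
    refine Finset.sum_congr rfl fun i hi => ?_
    have hgi : g i = 0 := by
      simp only [hRdef, Finset.mem_filter] at hi
      exact hi.2.1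
    exact (hBlcard i hgi).symm
  have hpair : ∀ i₁ l₁ i₂ l₂, ZeroRun g i₁ l₁ → ZeroRun g i₂ l₂ → l₂ ≤ l₁ + 1 := by
    rintro i₁ l₁ i₂ l₂ ⟨h11, h1z, h1m, h1e⟩ ⟨h21, h2z, h2m, h2e⟩
    by_contra hlt
    have hl2 : l₁ + 2 ≤ l₂ := by omega
    have hz2 : cycSum g i₂ (l₁ + 2) = 0 :=
      Finset.sum_eq_zero fun j hj => h2z j (by have := Finset.mem_range.mp hj; omega)
    have h2sum : cycSum g (i₁ - 1) (l₁ + 2) = 2 := by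
      have e1 : ∀ j : ℕ, i₁ - 1 + ((j + 1 : ℕ) : ZMod k) = i₁ + (j : ZMod k) := by
        intro j; push_cast; ring
      show ∑ j ∈ Finset.range (l₁ + 1 + 1), g (i₁ - 1 + (j : ZMod k)) = 2
      rw [Finset.sum_range_succ']
      rw [Finset.sum_range_succ]
      have hz : ∑ j ∈ Finset.range l₁, g (i₁ - 1 + ((j + 1 : ℕ) : ZMod k)) = 0 :=
        Finset.sum_eq_zero fun j hj => by
          rw [e1]; exact h1z j (Finset.mem_range.mp hj)
      rw [hz, e1 l₁]
      simp [h1e, h1m]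
    have := hbal (l₁ + 2) (by omega) (i₁ - 1) i₂
    rw [h2sum, hz2] at this
    omega
  have hXq : X * (Y / X) ≤ Y := by
    rw [mul_comm]; exact Nat.div_mul_le_self Y X
  have hRne : R.Nonempty := Finset.card_pos.mp (by omega)
  obtain ⟨i₀, hi₀, hmin⟩ := Finset.exists_min_image R L hRne
  have hrunR : ∀ i ∈ R, ZeroRun g i (L i) := by
    intro i hi
    simp only [hRdef, Finset.mem_filter, Finset.mem_univ, true_and] at hi
    exact hrunL i hi.1 hi.2
  have hub : ∀ i ∈ R, L i ≤ L i₀ + 1 := fun i hi => hpair _ _ _ _ (hrunR i₀ hi₀) (hrunR i hi)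
  have hsum_lb : X * L i₀ ≤ Y := by
    have h1 : (∑ _i ∈ R, L i₀) ≤ ∑ i ∈ R, L i := Finset.sum_le_sum fun i hi => hmin i hi
    rwa [hsumL, Finset.sum_const, hRcard, smul_eq_mul] at h1
  have hq_ub : L i₀ ≤ Y / X :=
    (Nat.le_div_iff_mul_le (show 0 < X by omega)).mpr (by rwa [mul_comm] at hsum_lb)
  have hq_lb : Y / X ≤ L i₀ := by
    by_contra hlt
    have h2 : L i₀ + 1 ≤ Y / X := by omega
    have h1 : (∑ i ∈ R, L i) < ∑ _i ∈ R, (L i₀ + 1) :=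
      Finset.sum_lt_sum hub ⟨i₀, hi₀, by omega⟩
    rw [hsumL, Finset.sum_const, hRcard, smul_eq_mul] at h1
    have h3 : X * (L i₀ + 1) ≤ X * (Y / X) := Nat.mul_le_mul_left X h2
    exact absurd h1 (not_lt.mpr (h3.trans hXq))
  have hLQ : L i₀ = Y / X := le_antisymm hq_ub hq_lb
  have hbounds : ∀ i ∈ R, L i = Y / X ∨ L i = Y / X + 1 := by
    intro i hi
    have h1 := hmin i hi
    have h2 := hub i hi
    omega
  have hmemR : ∀ i, g i = 0 → g (i - 1) = 1 → i ∈ R := by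
    intro i h1 h2
    simp only [hRdef, Finset.mem_filter, Finset.mem_univ, true_and]
    exact ⟨h1, h2⟩
  have hconc1 : ∀ i l, ZeroRun g i l → l = Y / X ∨ l = Y / X + 1 := by
    intro i l hr
    obtain ⟨h1, h2, rfl⟩ := huniq i l hr
    exact hbounds i (hmemR i h1 h2)
  have hset : ∀ c : ℕ, {i : ZMod k | ZeroRun g i c} = ↑(R.filter fun i => L i = c) := by
    intro c
    ext i
    simp only [Set.mem_setOf_eq, Finset.coe_filter, Finset.mem_filter, Set.mem_setOf_eq]
    constructor
    · intro hr
      obtain ⟨h1, h2, h3⟩ := huniq i c hr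
      exact ⟨hmemR i h1 h2, h3.symm⟩
    · rintro ⟨hi, hLi⟩
      simp only [hRdef, Finset.mem_filter, Finset.mem_univ, true_and] at hi
      have := hrunL i hi.1 hi.2
      rwa [hLi] at this
  set A := R.filter (fun i => L i = Y / X) with hA
  set B := R.filter (fun i => L i = Y / X + 1) with hB
  have hBalt : B = R.filter (fun i => ¬ L i = Y / X) := by
    apply Finset.filter_congr
    intro i hi
    have := hbounds i hi
    constructor <;> (intro h; omega)
  have hABcard : A.card + B.card = X := by
    rw [hA, hBalt, Finset.card_filter_add_card_filter_not, hRcard]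
  have hsplit : (∑ i ∈ A, L i) + (∑ i ∈ B, L i) = Y := by
    rw [hA, hBalt, Finset.sum_filter_add_sum_filter_not, hsumL]
  have hsA : ∑ i ∈ A, L i = A.card * (Y / X) := by
    rw [Finset.sum_congr rfl (fun i hi => (Finset.mem_filter.mp hi).2), Finset.sum_const,
      smul_eq_mul]
  have hsB : ∑ i ∈ B, L i = B.card * (Y / X + 1) := by
    rw [Finset.sum_congr rfl (fun i hi => (Finset.mem_filter.mp hi).2), Finset.sum_const,
      smul_eq_mul]
  have hkey : X * (Y / X) + B.card = Y := by
    have h1 : A.card * (Y / X) + B.card * (Y / X + 1) = Y := by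
      rw [← hsA, ← hsB]; exact hsplit
    have h2 : A.card * (Y / X) + B.card * (Y / X + 1) = (A.card + B.card) * (Y / X) + B.card := by
      ring
    rw [h2, hABcard] at h1
    exact h1
  refine ⟨hconc1, ?_, ?_⟩
  · rw [hset (Y / X), Set.ncard_coe_finset, ← hA]
    omega
  · rw [hset (Y / X + 1), Set.ncard_coe_finset, ← hB]
    omega

end Key2


/-- Let `w` be a small-variation necklace of profile `(m, x, y)` (entries in `{m, m+1}`,
`x` occurrences of `m`, `y` of `m+1`, `x, y ≥ 1`).  The derived necklace `A(w)`, whose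
entries are the run lengths of the majority value, has profile `(m', x', y')` with
`m' = ⌊max(x,y)/min(x,y)⌋`, `x' = min(x,y)(m'+1) - max(x,y)`, `y' = max(x,y) - min(x,y)·m'`,
and `min(x', y') < min(x, y)`. -/
theorem stmt13 (m x y : ℕ) (hm : 1 ≤ m) (hx : 1 ≤ x) (hy : 1 ≤ y)
    (f : ZMod (x + y) → ℕ)
    (hval : ∀ i, f i = m ∨ f i = m + 1)
    (hxc : {i : ZMod (x + y) | f i = m}.ncard = x)
    (hyc : {i : ZMod (x + y) | f i = m + 1}.ncard = y)
    (hsv : SmallVar f) :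
    (∀ i l, IsRun f (if x ≤ y then m + 1 else m) i l →
        l = max x y / min x y ∨ l = max x y / min x y + 1) ∧
    {i : ZMod (x + y) | ∃ l, IsRun f (if x ≤ y then m + 1 else m) i l ∧
        l = max x y / min x y}.ncard
      = min x y + min x y * (max x y / min x y) - max x y ∧
    {i : ZMod (x + y) | ∃ l, IsRun f (if x ≤ y then m + 1 else m) i l ∧
        l = max x y / min x y + 1}.ncard
      = max x y - min x y * (max x y / min x y) ∧
    min (min x y + min x y * (max x y / min x y) - max x y)
        (max x y - min x y * (max x y / min x y)) < min x y := by
  haveI : NeZero (x + y) := ⟨by omega⟩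
  set v : ℕ := if x ≤ y then m + 1 else m with hv
  set g : ZMod (x + y) → ℕ := fun i => if f i = v then 0 else 1 with hg
  have h01 : ∀ i, g i ≤ 1 := fun i => by simp only [hg]; split <;> omega
  have hzero_iff : ∀ i, g i = 0 ↔ f i = v := by
    intro i; simp only [hg]; split <;> simp [*] <;> assumption
  have hone_iff : ∀ i, g i = 1 ↔ f i ≠ v := by
    intro i; simp only [hg]; split <;> simp [*] <;> assumption
  have hIsRun : ∀ i l, IsRun f v i l ↔ ZeroRun g i l := by
    intro i l
    unfold IsRun ZeroRun
    constructor
    · rintro ⟨a, b, c, d⟩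
      exact ⟨a, fun j hj => (hzero_iff _).mpr (b j hj), (hone_iff _).mpr c, (hone_iff _).mpr d⟩
    · rintro ⟨a, b, c, d⟩
      exact ⟨a, fun j hj => (hzero_iff _).mp (b j hj), (hone_iff _).mp c, (hone_iff _).mp d⟩
  have hsetRun : ∀ c : ℕ, {i : ZMod (x + y) | ∃ l, IsRun f v i l ∧ l = c}
      = {i : ZMod (x + y) | ZeroRun g i c} := by
    intro c
    ext i
    simp only [Set.mem_setOf_eq]
    constructor
    · rintro ⟨l, hr, rfl⟩
      exact (hIsRun i l).mp hr
    · intro h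
      exact ⟨c, (hIsRun i c).mpr h, rfl⟩
  by_cases hxy : x ≤ y
  · have hvv : v = m + 1 := by rw [hv, if_pos hxy]
    have hmin : min x y = x := min_eq_left hxy
    have hmax : max x y = y := max_eq_right hxy
    have hcard : {i : ZMod (x + y) | g i = 1}.ncard = x := by
      rw [show {i : ZMod (x + y) | g i = 1} = {i : ZMod (x + y) | f i = m} by
        ext i
        simp only [Set.mem_setOf_eq, hone_iff, hvv]
        rcases hval i with h | h <;> simp [h]]
      exact hxc
    have hfg : ∀ (i : ZMod (x + y)) (s : ℕ),
        (cycSum f i s : ℤ) = s * (m + 1) - cycSum g i s := by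
      intro i s
      unfold cycSum
      push_cast
      have hpt : ∀ j ∈ Finset.range s,
          (f (i + (j : ZMod (x + y))) : ℤ) = (m + 1 : ℤ) - g (i + (j : ZMod (x + y))) := by
        intro j _
        rcases hval (i + (j : ZMod (x + y))) with h | h
        · have hg1 : g (i + (j : ZMod (x + y))) = 1 := (hone_iff _).mpr (by rw [hvv, h]; omega)
          rw [h, hg1]; push_cast; ring
        · have hg0 : g (i + (j : ZMod (x + y))) = 0 := (hzero_iff _).mpr (by rw [hvv, h])
          rw [h, hg0]; push_cast; ring
      rw [Finset.sum_congr rfl hpt, Finset.sum_sub_distrib, Finset.sum_const,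
        Finset.card_range, nsmul_eq_mul]
    have hbal : ∀ s, 1 ≤ s → ∀ i₁ i₂ : ZMod (x + y), cycSum g i₁ s ≤ cycSum g i₂ s + 1 := by
      intro s hs i₁ i₂
      have h := hsv s hs i₁ i₂
      rw [hfg i₁ s, hfg i₂ s, abs_le] at h
      omega
    obtain ⟨c1, c2, c3⟩ := key (k := x + y) x y hx hxy rfl g h01 hcard hbal
    rw [hmin, hmax]
    refine ⟨fun i l hr => c1 i l ((hIsRun i l).mp hr), ?_, ?_, ?_⟩
    · rw [hsetRun, c2]
    · rw [hsetRun, c3]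
    · have hmod := Nat.div_add_mod y x
      have hlt : y % x < x := Nat.mod_lt y (by omega)
      omega
  · have hxy' : y ≤ x := by omega
    have hvv : v = m := by rw [hv, if_neg hxy]
    have hmin : min x y = y := min_eq_right hxy'
    have hmax : max x y = x := max_eq_left hxy'
    have hcard : {i : ZMod (x + y) | g i = 1}.ncard = y := by
      rw [show {i : ZMod (x + y) | g i = 1} = {i : ZMod (x + y) | f i = m + 1} by
        ext i
        simp only [Set.mem_setOf_eq, hone_iff, hvv]
        rcases hval i with h | h <;> simp [h]]
      exact hyc
    have hfg : ∀ (i : ZMod (x + y)) (s : ℕ),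
        (cycSum f i s : ℤ) = s * m + cycSum g i s := by
      intro i s
      unfold cycSum
      push_cast
      have hpt : ∀ j ∈ Finset.range s,
          (f (i + (j : ZMod (x + y))) : ℤ) = (m : ℤ) + g (i + (j : ZMod (x + y))) := by
        intro j _
        rcases hval (i + (j : ZMod (x + y))) with h | h
        · have hg0 : g (i + (j : ZMod (x + y))) = 0 := (hzero_iff _).mpr (by rw [hvv, h])
          rw [h, hg0]; push_cast; ring
        · have hg1 : g (i + (j : ZMod (x + y))) = 1 := (hone_iff _).mpr (by rw [hvv, h]; omega)
          rw [h, hg1]; push_cast; ring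
      rw [Finset.sum_congr rfl hpt, Finset.sum_add_distrib, Finset.sum_const,
        Finset.card_range, nsmul_eq_mul]
    have hbal : ∀ s, 1 ≤ s → ∀ i₁ i₂ : ZMod (x + y), cycSum g i₁ s ≤ cycSum g i₂ s + 1 := by
      intro s hs i₁ i₂
      have h := hsv s hs i₁ i₂
      rw [hfg i₁ s, hfg i₂ s, abs_le] at h
      omega
    obtain ⟨c1, c2, c3⟩ := key (k := x + y) y x hy hxy' (by omega) g h01 hcard hbal
    rw [hmin, hmax]
    refine ⟨fun i l hr => c1 i l ((hIsRun i l).mp hr), ?_, ?_, ?_⟩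
    · rw [hsetRun, c2]
    · rw [hsetRun, c3]
    · have hmod := Nat.div_add_mod x y
      have hlt : x % y < y := Nat.mod_lt x (by omega)
      omega
end

section
/- For every positive integer L, the number of necklaces [n_1, ..., n_r] of positive integers with small variation and total weight L, where the weight is r + Σ_i n_i, equals ⌊L/2⌋. -/
/-- The sum of `s` cyclically consecutive entries of the list `l`, starting at index `i`
(indices taken modulo `l.length`). -/
def cycSumL (l : List ℕ) (i s : ℕ) : ℕ :=
  ∑ j ∈ Finset.range s, l.getD ((i + j) % l.length) 0

/-- A list, viewed as a cyclic sequence, has small variation if for every `s ≥ 1` any two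
sums of `s` cyclically consecutive entries differ by at most `1`. -/
def SmallVarL (l : List ℕ) : Prop :=
  ∀ s : ℕ, 1 ≤ s → ∀ i₁ i₂ : ℕ, |(cycSumL l i₁ s : ℤ) - (cycSumL l i₂ s : ℤ)| ≤ 1


lemma rot_one (r : ℕ) (hr : 0 < r) (F : ℕ → ℕ) :
    ∑ i ∈ Finset.range r, F ((i + 1) % r) = ∑ i ∈ Finset.range r, F i := by
  obtain ⟨m, rfl⟩ : ∃ m, r = m + 1 := ⟨r - 1, by omega⟩
  rw [Finset.sum_range_succ, Finset.sum_range_succ']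
  rw [Nat.mod_self]
  congr 1
  apply Finset.sum_congr rfl
  intro i hi
  rw [Finset.mem_range] at hi
  rw [Nat.mod_eq_of_lt (by omega)]

lemma rot_sum (r : ℕ) (hr : 0 < r) (j : ℕ) (F : ℕ → ℕ) :
    ∑ i ∈ Finset.range r, F ((i + j) % r) = ∑ i ∈ Finset.range r, F i := by
  induction j with
  | zero => apply Finset.sum_congr rfl; intro i hi; rw [Finset.mem_range] at hi;
            rw [Nat.add_zero, Nat.mod_eq_of_lt hi]
  | succ j ih =>
      have h : ∀ i, (i + (j+1)) % r = ((i+1) % r + j) % r := by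
        intro i; rw [Nat.mod_add_mod]; ring_nf
      calc ∑ i ∈ Finset.range r, F ((i + (j+1)) % r)
          = ∑ i ∈ Finset.range r, (fun x => F ((x + j) % r)) ((i+1) % r) := by
            apply Finset.sum_congr rfl; intro i _; simp only []; rw [h i]
        _ = ∑ i ∈ Finset.range r, (fun x => F ((x + j) % r)) i :=
            rot_one r hr (fun x => F ((x + j) % r))
        _ = ∑ i ∈ Finset.range r, F i := ih

lemma sum_getD (l : List ℕ) : ∑ j ∈ Finset.range l.length, l.getD j 0 = l.sum := by
  induction l with
  | nil => simp
  | cons a t ih =>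
      rw [List.length_cons, Finset.sum_range_succ', List.sum_cons]
      simp only [List.getD_cons_succ, List.getD_cons_zero]
      rw [ih]; ring

lemma cycSum_full (l : List ℕ) (hl : l ≠ []) (i : ℕ) : cycSumL l i l.length = l.sum := by
  have hr : 0 < l.length := List.length_pos_iff.mpr hl
  unfold cycSumL
  calc ∑ j ∈ Finset.range l.length, l.getD ((i + j) % l.length) 0
      = ∑ j ∈ Finset.range l.length, (fun k => l.getD k 0) ((j + i) % l.length) := by
        apply Finset.sum_congr rfl; intro j _; rw [Nat.add_comm i j]
    _ = ∑ j ∈ Finset.range l.length, (fun k => l.getD k 0) j :=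
        rot_sum _ hr i (fun k => l.getD k 0)
    _ = l.sum := sum_getD l

lemma cycSum_total_s14 (l : List ℕ) (hl : l ≠ []) (s : ℕ) :
    ∑ i ∈ Finset.range l.length, cycSumL l i s = s * l.sum := by
  have hr : 0 < l.length := List.length_pos_iff.mpr hl
  unfold cycSumL
  rw [Finset.sum_comm]
  have : ∀ j ∈ Finset.range s,
      ∑ i ∈ Finset.range l.length, l.getD ((i + j) % l.length) 0 = l.sum := by
    intro j _
    rw [rot_sum _ hr j (fun k => l.getD k 0), sum_getD]
  rw [Finset.sum_congr rfl this, Finset.sum_const, Finset.card_range, smul_eq_mul]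

lemma cycSum_succ (l : List ℕ) (i s : ℕ) :
    cycSumL l i (s+1) = cycSumL l i s + l.getD ((i + s) % l.length) 0 :=
  Finset.sum_range_succ _ _

lemma cycSum_split (l : List ℕ) (i s : ℕ) :
    cycSumL l 0 (i + s) = cycSumL l 0 i + cycSumL l i s := by
  induction s with
  | zero => simp [cycSumL]
  | succ s ih =>
      rw [show i + (s+1) = (i+s)+1 from rfl, cycSum_succ, cycSum_succ, ih,
        Nat.zero_add, Nat.add_assoc]

lemma cycSum_mod (l : List ℕ) (i s : ℕ) : cycSumL l i s = cycSumL l (i % l.length) s := by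
  unfold cycSumL
  apply Finset.sum_congr rfl
  intro j _
  rw [Nat.mod_add_mod]

lemma window_bounds (l : List ℕ) (hl : l ≠ []) (hsv : SmallVarL l) (i s : ℕ) :
    (l.length : ℤ) * cycSumL l i s ≤ s * l.sum + (l.length - 1) ∧
      (s * l.sum : ℤ) ≤ l.length * cycSumL l i s + (l.length - 1) := by
  have hr : 0 < l.length := List.length_pos_iff.mpr hl
  rcases Nat.eq_zero_or_pos s with rfl | hs
  · simp [cycSumL]; omega
  set r := l.length with hrdef
  have hi' : i % r ∈ Finset.range r := Finset.mem_range.mpr (Nat.mod_lt _ hr)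
  have htot : (∑ j ∈ Finset.range r, (cycSumL l j s : ℤ)) = s * l.sum := by
    rw [← Nat.cast_sum]
    exact_mod_cast congrArg (Nat.cast : ℕ → ℤ) (cycSum_total_s14 l hl s)
  have hsplit := (Finset.add_sum_erase (Finset.range r) (fun j => (cycSumL l j s : ℤ)) hi').symm
  have hcard : ((Finset.range r).erase (i % r)).card = r - 1 := by
    rw [Finset.card_erase_of_mem hi', Finset.card_range]
  have hmod : (cycSumL l (i % r) s : ℤ) = cycSumL l i s := by
    rw [← cycSum_mod]
  have hlow : ∀ j ∈ (Finset.range r).erase (i % r),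
      (cycSumL l i s : ℤ) - 1 ≤ cycSumL l j s := by
    intro j _
    have := hsv s hs i j
    rw [abs_le] at this; omega
  have hhigh : ∀ j ∈ (Finset.range r).erase (i % r),
      (cycSumL l j s : ℤ) ≤ cycSumL l i s + 1 := by
    intro j _
    have := hsv s hs j i
    rw [abs_le] at this; omega
  have h1 := Finset.card_nsmul_le_sum _ _ _ hlow
  have h2 := Finset.sum_le_card_nsmul _ _ _ hhigh
  rw [hcard, nsmul_eq_mul] at h1 h2
  have hrc : ((r - 1 : ℕ) : ℤ) = (r : ℤ) - 1 := by
    have : 1 ≤ r := hr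
    push_cast [this]; ring
  rw [hrc] at h1 h2
  constructor
  · nlinarith [htot, hsplit, hmod, h1]
  · nlinarith [htot, hsplit, hmod, h2]

/-! ### Auxiliary: the ceiling function `gg n r k = ⌈n k / r⌉` and the canonical word -/

def gg (n r k : ℕ) : ℕ := (n * k + r - 1) / r

lemma gg_lb (n r k : ℕ) (hr : 0 < r) : n * k ≤ r * gg n r k := by
  have h1 := Nat.div_add_mod (n * k + r - 1) r
  have h2 : (n * k + r - 1) % r < r := Nat.mod_lt _ hr
  unfold gg; omega

lemma gg_ub (n r k : ℕ) : r * gg n r k ≤ n * k + r - 1 := by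
  have h1 := Nat.div_add_mod (n * k + r - 1) r
  unfold gg; omega

lemma gg_zero (n r : ℕ) (hr : 0 < r) : gg n r 0 = 0 := by
  unfold gg; rw [Nat.mul_zero, Nat.zero_add]; exact Nat.div_eq_of_lt (by omega)

lemma gg_mono (n r : ℕ) {k k' : ℕ} (h : k ≤ k') : gg n r k ≤ gg n r k' := by
  have := Nat.mul_le_mul_left n h
  exact Nat.div_le_div_right (by omega)

lemma gg_strict (n r k : ℕ) (hr : 0 < r) (hnr : r ≤ n) : gg n r k < gg n r (k+1) := by
  have h1 := gg_ub n r k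
  have h2 := gg_lb n r (k+1) hr
  have h3 : r * gg n r k < r * gg n r (k+1) := by
    zify [show (1:ℕ) ≤ n*k + r by omega] at h1
    zify at h2 ⊢
    linarith
  exact lt_of_mul_lt_mul_left h3 (Nat.zero_le r)

lemma gg_period (n r k : ℕ) (hr : 0 < r) : gg n r (k + r) = gg n r k + n := by
  unfold gg
  have h : n * (k + r) + r - 1 = (n * k + r - 1) + r * n := by
    have : n * (k + r) = n * k + r * n := by ring
    omega
  rw [h, Nat.add_mul_div_left _ _ hr]

lemma gg_period_mul (n r : ℕ) (hr : 0 < r) (q k : ℕ) :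
    gg n r (k + q * r) = gg n r k + q * n := by
  induction q with
  | zero => simp
  | succ q ih =>
      have : k + (q+1) * r = (k + q * r) + r := by ring
      rw [this, gg_period _ _ _ hr, ih]; ring

/-- The canonical balanced word of length `r` and sum `n`. -/
def Wl (r n : ℕ) : List ℕ := (List.range r).map (fun i => gg n r (i+1) - gg n r i)

lemma Wl_length (r n : ℕ) : (Wl r n).length = r := by simp [Wl]

lemma Wl_ne_nil (r n : ℕ) (hr : 0 < r) : Wl r n ≠ [] := by
  intro h
  have := Wl_length r n
  rw [h] at this
  simp at this; omega

lemma Wl_getD (r n k : ℕ) (hk : k < r) :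
    (Wl r n).getD k 0 = gg n r (k+1) - gg n r k := by
  have hk' : k < (Wl r n).length := by rw [Wl_length]; exact hk
  rw [List.getD_eq_getElem _ _ hk']
  simp [Wl]

lemma Wl_getD_mod (r n k : ℕ) (hr : 0 < r) :
    (Wl r n).getD (k % r) 0 = gg n r (k+1) - gg n r k := by
  rw [Wl_getD r n (k % r) (Nat.mod_lt _ hr)]
  have h1 : k % r + (k / r) * r = k := Nat.mod_add_div' k r
  have h2 := gg_period_mul n r hr (k / r) (k % r)
  have h3 := gg_period_mul n r hr (k / r) (k % r + 1)
  rw [h1] at h2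
  have h4 : k % r + 1 + k / r * r = k + 1 := by omega
  rw [h4] at h3
  omega

lemma cycSum_Wl (r n : ℕ) (hr : 0 < r) (i s : ℕ) :
    cycSumL (Wl r n) i s = gg n r (i+s) - gg n r i := by
  induction s with
  | zero => simp [cycSumL]
  | succ s ih =>
      have h := Finset.sum_range_succ (fun j => (Wl r n).getD ((i + j) % (Wl r n).length) 0) s
      unfold cycSumL at ih ⊢
      rw [h, ih, Wl_length, Wl_getD_mod r n (i+s) hr]
      have m1 : gg n r i ≤ gg n r (i + s) := gg_mono n r (by omega)
      have m2 : gg n r (i + s) ≤ gg n r (i + s + 1) := gg_mono n r (by omega)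
      have : i + (s + 1) = i + s + 1 := by omega
      rw [this]
      omega

lemma Wl_smallvar (r n : ℕ) (hr : 0 < r) : SmallVarL (Wl r n) := by
  intro s hs i1 i2
  rw [cycSum_Wl r n hr, cycSum_Wl r n hr]
  have c1 : ((gg n r (i1+s) - gg n r i1 : ℕ) : ℤ) = (gg n r (i1+s) : ℤ) - gg n r i1 := by
    have := gg_mono n r (show i1 ≤ i1 + s by omega); push_cast [this]; ring
  have c2 : ((gg n r (i2+s) - gg n r i2 : ℕ) : ℤ) = (gg n r (i2+s) : ℤ) - gg n r i2 := by
    have := gg_mono n r (show i2 ≤ i2 + s by omega); push_cast [this]; ring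
  rw [c1, c2]
  have b1 := gg_lb n r (i1+s) hr
  have b2 := gg_ub n r (i1+s)
  have b3 := gg_lb n r i1 hr
  have b4 := gg_ub n r i1
  have b5 := gg_lb n r (i2+s) hr
  have b6 := gg_ub n r (i2+s)
  have b7 := gg_lb n r i2 hr
  have b8 := gg_ub n r i2
  zify [show (1:ℕ) ≤ n*(i1+s) + r by omega, show (1:ℕ) ≤ n*i1 + r by omega,
    show (1:ℕ) ≤ n*(i2+s) + r by omega, show (1:ℕ) ≤ n*i2 + r by omega] at b1 b2 b3 b4 b5 b6 b7 b8
  set x : ℤ := (gg n r (i1+s) : ℤ) - gg n r i1 - ((gg n r (i2+s) : ℤ) - gg n r i2) with hx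
  have hxr : (r:ℤ) * |x| < r * 2 := by
    rcases abs_cases x with ⟨h, _⟩ | ⟨h, _⟩ <;> rw [h, hx] <;> linarith
  have h2 := lt_of_mul_lt_mul_left hxr (by positivity : (0:ℤ) ≤ r)
  exact Int.lt_add_one_iff.mp h2

lemma Wl_sum (r n : ℕ) (hr : 0 < r) : (Wl r n).sum = n := by
  have h := cycSum_Wl r n hr 0 r
  rw [show (0:ℕ) + r = 0 + r from rfl] at h
  have h2 : gg n r (0 + r) = gg n r 0 + n := gg_period n r 0 hr
  have h3 := gg_zero n r hr
  have h4 : cycSumL (Wl r n) 0 (Wl r n).length = (Wl r n).sum :=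
    cycSum_full (Wl r n) (Wl_ne_nil r n hr) 0
  rw [Wl_length] at h4
  omega

lemma Wl_pos (r n : ℕ) (hr : 0 < r) (hnr : r ≤ n) : ∀ x ∈ Wl r n, 1 ≤ x := by
  intro x hx
  rw [Wl, List.mem_map] at hx
  obtain ⟨i, _, rfl⟩ := hx
  have := gg_strict n r i hr hnr
  omega

lemma length_le_sum (l : List ℕ) (h : ∀ x ∈ l, 1 ≤ x) : l.length ≤ l.sum := by
  induction l with
  | nil => simp
  | cons a t ih =>
      have ha : 1 ≤ a := h a List.mem_cons_self
      have := ih (fun x hx => h x (List.mem_cons_of_mem a hx))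
      simp only [List.length_cons, List.sum_cons]
      omega

theorem uniq (l : List ℕ) (hl : l ≠ []) (hsv : SmallVarL l) :
    (↑l : Cycle ℕ) = ↑(Wl l.length l.sum) := by
  have hr : 0 < l.length := List.length_pos_iff.mpr hl
  set r := l.length with hr0
  set n := l.sum with hn0
  set F : ℕ → ℤ := fun i => (r:ℤ) * (cycSumL l 0 i : ℤ) - (n:ℤ) * i with hF
  have hFper : ∀ i, F (i + r) = F i := by
    intro i
    have h1 : cycSumL l 0 (i + r) = cycSumL l 0 i + cycSumL l i r := cycSum_split l i r
    have h2 : cycSumL l i r = n := cycSum_full l hl i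
    simp only [hF]
    rw [h1, h2]
    push_cast
    ring
  have hFq : ∀ q i, F (i + q * r) = F i := by
    intro q
    induction q with
    | zero => intro i; simp
    | succ q ih =>
        intro i
        have h : i + (q+1) * r = (i + q * r) + r := by ring
        rw [h, hFper, ih]
  have hFmod : ∀ i, F (i % r) = F i := by
    intro i
    have := hFq (i / r) (i % r)
    rw [Nat.mod_add_div' i r] at this
    exact this.symm
  obtain ⟨i₀, hi₀, hmin⟩ :=
    Finset.exists_min_image (Finset.range r) F ⟨0, Finset.mem_range.mpr hr⟩
  have hi₀r : i₀ < r := Finset.mem_range.mp hi₀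
  have key : ∀ s, (cycSumL l 0 (i₀ + s) : ℤ) = (cycSumL l 0 i₀ : ℤ) + gg n r s := by
    intro s
    have hsp : cycSumL l 0 (i₀ + s) = cycSumL l 0 i₀ + cycSumL l i₀ s := cycSum_split l i₀ s
    have hmin' : F i₀ ≤ F (i₀ + s) := by
      rw [← hFmod (i₀ + s)]
      exact hmin _ (Finset.mem_range.mpr (Nat.mod_lt _ hr))
    have hwb := (window_bounds l hl hsv i₀ s).1
    rw [← hr0, ← hn0] at hwb
    have hg1 := gg_lb n r s hr
    have hg2 := gg_ub n r s
    zify [show (1:ℕ) ≤ n * s + r by omega] at hg1 hg2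
    simp only [hF] at hmin'
    rw [hsp] at hmin'
    push_cast at hmin'
    rw [hsp]
    push_cast
    set c := (cycSumL l i₀ s : ℤ) with hc
    set g := (gg n r s : ℤ) with hg
    have hcg : (r:ℤ) * |c - g| < r * 1 := by
      rcases abs_cases (c - g) with ⟨h, _⟩ | ⟨h, _⟩ <;> rw [h] <;> linarith
    have h2 := lt_of_mul_lt_mul_left hcg (by positivity : (0:ℤ) ≤ r)
    have h4 : |c - g| ≤ 0 := Int.lt_add_one_iff.mp (by simpa using h2)
    have h5 : c - g = 0 := abs_eq_zero.mp (le_antisymm h4 (abs_nonneg _))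
    linarith
  have hget : ∀ s, s < r → l.getD ((s + i₀) % l.length) 0 = (Wl r n).getD s 0 := by
    intro s hs
    rw [Nat.add_comm s i₀]
    have k1 := key (s + 1)
    have k2 := key s
    have hsucc := cycSum_succ l 0 (i₀ + s)
    rw [Nat.zero_add] at hsucc
    have hW := Wl_getD r n s hs
    have hmono : gg n r s ≤ gg n r (s+1) := gg_mono n r (by omega)
    have hadd : i₀ + (s + 1) = (i₀ + s) + 1 := by omega
    rw [hadd] at k1
    rw [hsucc] at k1
    push_cast at k1
    have : (l.getD ((i₀ + s) % l.length) 0 : ℤ) = (gg n r (s+1) : ℤ) - gg n r s := by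
      linarith
    rw [hW]
    omega
  have hrot : l.rotate i₀ = Wl r n := by
    apply List.ext_getElem
    · rw [List.length_rotate, Wl_length]
    · intro s h1 h2
      rw [List.getElem_rotate]
      have hs : s < r := by rwa [Wl_length] at h2
      have h3 := hget s hs
      have hml : (s + i₀) % l.length < l.length := Nat.mod_lt _ hr
      rw [List.getD_eq_getElem l 0 hml, List.getD_eq_getElem (Wl r n) 0 h2] at h3
      exact h3
  exact Cycle.coe_eq_coe.mpr ⟨i₀, hrot⟩

/-- For every positive integer `L`, the number of necklaces `[n_1, …, n_r]` of positive
integers (cyclic sequences up to rotation, modeled as `Cycle ℕ`) with small variation and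
weight `r + ∑ n_i = L` equals `⌊L/2⌋`. -/
theorem stmt14 (L : ℕ) (hL : 1 ≤ L) :
    {c : Cycle ℕ | ∃ l : List ℕ, (↑l : Cycle ℕ) = c ∧ l ≠ [] ∧ (∀ n ∈ l, 1 ≤ n) ∧
        SmallVarL l ∧ l.length + l.sum = L}.ncard = L / 2 := by
  have himg : {c : Cycle ℕ | ∃ l : List ℕ, (↑l : Cycle ℕ) = c ∧ l ≠ [] ∧ (∀ n ∈ l, 1 ≤ n) ∧
      SmallVarL l ∧ l.length + l.sum = L}
      = (fun k => ((Wl k (L - k) : List ℕ) : Cycle ℕ)) '' (Set.Icc 1 (L/2)) := by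
    ext c
    simp only [Set.mem_setOf_eq, Set.mem_image, Set.mem_Icc]
    constructor
    · rintro ⟨l, hcl, hne, hpos, hsv, hlen⟩
      have hr : 0 < l.length := List.length_pos_iff.mpr hne
      have hns : l.length ≤ l.sum := length_le_sum l hpos
      refine ⟨l.length, ⟨hr, ?_⟩, ?_⟩
      · rw [Nat.le_div_iff_mul_le (by norm_num : 0 < 2)]
        omega
      · have h1 : L - l.length = l.sum := by omega
        rw [h1, ← hcl]
        exact (uniq l hne hsv).symm
    · rintro ⟨k, ⟨hk1, hk2⟩, rfl⟩
      rw [Nat.le_div_iff_mul_le (by norm_num : 0 < 2)] at hk2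
      refine ⟨Wl k (L - k), rfl, Wl_ne_nil k _ hk1, Wl_pos k (L - k) hk1 (by omega),
        Wl_smallvar k _ hk1, ?_⟩
      rw [Wl_length, Wl_sum _ _ hk1]
      omega
  rw [himg]
  have hinj : Set.InjOn (fun k => ((Wl k (L - k) : List ℕ) : Cycle ℕ)) (Set.Icc 1 (L/2)) := by
    intro a _ b _ hab
    have := congrArg Cycle.length hab
    simpa [Cycle.length_coe, Wl_length] using this
  rw [Set.ncard_image_of_injOn hinj, ← Finset.coe_Icc, Set.ncard_coe_finset, Nat.card_Icc]
  omega
end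

section
/- Let m ≥ 1, x ≥ 1, y ≥ 1 with x dividing y and x > 2. Then no necklace with exactly x occurrences of m and y occurrences of m+1 (and no other entries) has 2-variation. -/
/-- `EssPair m f i₁ i₂ s`: the two cyclically contiguous blocks of length `s` starting at
`i₁` and `i₂` form an essential pair: one is `(m, x_2, …, x_{s-1}, m)`, the other is
`(m+1, x_2, …, x_{s-1}, m+1)`, with identical middle entries. -/
def EssPair {k : ℕ} (m : ℕ) (f : ZMod k → ℕ) (i₁ i₂ : ZMod k) (s : ℕ) : Prop :=
  2 ≤ s ∧ s ≤ k ∧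
  f i₁ = m ∧ f (i₁ + ((s - 1 : ℕ) : ZMod k)) = m ∧
  f i₂ = m + 1 ∧ f (i₂ + ((s - 1 : ℕ) : ZMod k)) = m + 1 ∧
  ∀ j : ℕ, 1 ≤ j → j ≤ s - 2 → f (i₁ + (j : ZMod k)) = f (i₂ + (j : ZMod k))

/-- A necklace with entries in `{m, m+1}` has `2`-variation if exactly one pair of its
blocks is essential. -/
def TwoVar {k : ℕ} (m : ℕ) (f : ZMod k → ℕ) : Prop :=
  ∃! p : ZMod k × ZMod k × ℕ, EssPair m f p.1 p.2.1 p.2.2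

lemma extract_dpd (T : ℕ → ℤ) (d : ℕ → ℤ)
    (hTd : ∀ n, T (n+1) = T n + d n)
    (hd : ∀ n, -1 ≤ d n ∧ d n ≤ 1)
    (n₀ n₁ : ℕ) (h01 : n₀ < n₁)
    (hmax : ∀ n, T n ≤ T n₀)
    (hdrop : T n₁ ≤ T n₀ - 2) :
    ∃ p u, n₀ ≤ p ∧ 1 ≤ u ∧ p + u < n₁ ∧ d p = -1 ∧ d (p + u) = -1 ∧
      ∀ j, 1 ≤ j → j ≤ u - 1 → d (p + j) = 0 := by
  classical
  set M := T n₀ with hM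
  have hAne : ((Finset.Ico n₀ n₁).filter (fun n => T n = M)).Nonempty :=
    ⟨n₀, by simp [Finset.mem_filter, Finset.mem_Ico, h01, hM]⟩
  set A := (Finset.Ico n₀ n₁).filter (fun n => T n = M) with hA
  set p := A.max' hAne with hp
  have hpA : p ∈ A := A.max'_mem hAne
  have hpIco : p ∈ Finset.Ico n₀ n₁ := (Finset.mem_filter.mp hpA).1
  have hTp : T p = M := (Finset.mem_filter.mp hpA).2
  have hn₀p : n₀ ≤ p := (Finset.mem_Ico.mp hpIco).1
  have hpn₁ : p < n₁ := (Finset.mem_Ico.mp hpIco).2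
  have hafter : ∀ n, p < n → n < n₁ → T n ≤ M - 1 := by
    intro n h1 h2
    have hne : T n ≠ M := by
      intro h
      have hmem : n ∈ A := Finset.mem_filter.mpr
        ⟨Finset.mem_Ico.mpr ⟨le_trans hn₀p (le_of_lt h1), h2⟩, h⟩
      have := Finset.le_max' A n hmem
      omega
    have := hmax n
    omega
  have hp1lt : p + 1 < n₁ := by
    rcases Nat.lt_or_ge (p+1) n₁ with h | h
    · exact h
    · exfalso
      have he : p + 1 = n₁ := by omega
      have h1 := hTd p
      have h2 := hd p
      rw [he] at h1
      omega
  have hTp1 : T (p+1) = M - 1 := by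
    have h1 := hTd p
    have h2 := hd p
    have h3 := hafter (p+1) (by omega) hp1lt
    omega
  have hBne : ((Finset.Ioc (p+1) n₁).filter (fun n => T n ≤ M - 2)).Nonempty :=
    ⟨n₁, by simp [Finset.mem_filter, Finset.mem_Ioc, hp1lt, hdrop]⟩
  set B := (Finset.Ioc (p+1) n₁).filter (fun n => T n ≤ M - 2) with hB
  set p'' := B.min' hBne with hp''
  have hpB : p'' ∈ B := B.min'_mem hBne
  have h1 : p + 1 < p'' := (Finset.mem_Ioc.mp (Finset.mem_filter.mp hpB).1).1
  have h2 : p'' ≤ n₁ := (Finset.mem_Ioc.mp (Finset.mem_filter.mp hpB).1).2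
  have hTpp : T p'' ≤ M - 2 := (Finset.mem_filter.mp hpB).2
  have hmid : ∀ n, p < n → n < p'' → T n = M - 1 := by
    intro n ha hb
    rcases Nat.lt_or_ge (p+1) n with h | h
    · have hup : T n ≤ M - 1 := hafter n ha (lt_of_lt_of_le hb h2)
      have hlo : ¬ (T n ≤ M - 2) := by
        intro hc
        have hmem : n ∈ B := Finset.mem_filter.mpr
          ⟨Finset.mem_Ioc.mpr ⟨h, le_trans (le_of_lt hb) h2⟩, hc⟩
        have := Finset.min'_le B n hmem
        omega
      omega
    · have : n = p + 1 := by omega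
      rw [this]; exact hTp1
  refine ⟨p, p'' - 1 - p, hn₀p, by omega, by omega, ?_, ?_, ?_⟩
  · have h3 := hTd p
    omega
  · have e : p + (p'' - 1 - p) = p'' - 1 := by omega
    rw [e]
    have h3 := hTd (p'' - 1)
    have h4 : p'' - 1 + 1 = p'' := by omega
    rw [h4] at h3
    have h5 : T (p'' - 1) = M - 1 := hmid _ (by omega) (by omega)
    have h6 := hd (p'' - 1)
    omega
  · intro j hj1 hj2
    have h3 := hTd (p + j)
    have h5 : T (p + j) = M - 1 := hmid _ (by omega) (by omega)
    have h6 : T (p + j + 1) = M - 1 := hmid _ (by omega) (by omega)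
    omega

/-- If `m ≥ 1`, `x ∣ y` and `x > 2`, then no necklace with exactly `x` occurrences of `m`
and `y` occurrences of `m+1` (and no other entries) has `2`-variation. -/
theorem stmt17 (m x y : ℕ) (hm : 1 ≤ m) (hx : 1 ≤ x) (hy : 1 ≤ y)
    (hdvd : x ∣ y) (hx2 : 2 < x)
    (f : ZMod (x + y) → ℕ)
    (hval : ∀ i, f i = m ∨ f i = m + 1)
    (hxc : {i : ZMod (x + y) | f i = m}.ncard = x)
    (hyc : {i : ZMod (x + y) | f i = m + 1}.ncard = y) :
    ¬ TwoVar m f := by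
  classical
  intro htv
  haveI : NeZero (x + y) := ⟨by omega⟩
  obtain ⟨q, hq⟩ := hdvd
  have hq1 : 1 ≤ q := by
    rcases Nat.eq_zero_or_pos q with rfl | h
    · simp at hq; omega
    · exact h
  set t := q + 1 with ht
  have hkt : x + y = x * t := by rw [ht, hq]; ring
  have htk : 2 * t < x + y := by
    have h3 : 3 ≤ x := hx2
    nlinarith
  have ht2 : 2 ≤ t := by omega
  -- the indicator of f = m
  set χ : ZMod (x + y) → ℕ := fun i => if f i = m then 1 else 0 with hχdef
  have hχle : ∀ i, χ i ≤ 1 := by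
    intro i; rw [hχdef]; dsimp only; split <;> omega
  have hχ1 : ∀ i, χ i = 1 → f i = m := by
    intro i h; by_contra hc
    simp only [hχdef, if_neg hc] at h
    omega
  have hχ0 : ∀ i, χ i = 0 → f i = m + 1 := by
    intro i h
    rcases hval i with h' | h'
    · simp only [hχdef, if_pos h'] at h
      omega
    · exact h'
  have hfχ : ∀ a b : ZMod (x + y), χ a = χ b → f a = f b := by
    intro a b h
    rcases Nat.le_one_iff_eq_zero_or_eq_one.mp (hχle a) with h0 | h1
    · rw [hχ0 a h0, hχ0 b (by omega)]
    · rw [hχ1 a h1, hχ1 b (by omega)]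
  have hsum : ∑ i : ZMod (x + y), χ i = x := by
    have h1 : {i : ZMod (x+y) | f i = m}.ncard = ∑ i : ZMod (x+y), χ i := by
      rw [Set.ncard_eq_toFinset_card', Set.toFinset_setOf, Finset.card_filter, hχdef]
    rw [← h1]; exact hxc
  -- window sums of length t
  set S : ZMod (x + y) → ℕ := fun i => ∑ j ∈ Finset.range t, χ (i + (j : ZMod (x+y))) with hSdef
  have hrec : ∀ i : ZMod (x + y), S (i + 1) + χ i = S i + χ (i + (t : ZMod (x+y))) := by
    intro i
    have h1 : S (i + 1) = ∑ j ∈ Finset.range t, χ (i + ((j + 1 : ℕ) : ZMod (x+y))) := by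
      rw [hSdef]
      apply Finset.sum_congr rfl
      intro j _
      congr 1
      push_cast
      ring
    have h2 := Finset.sum_range_succ' (fun j : ℕ => χ (i + (j : ZMod (x+y)))) t
    have h3 := Finset.sum_range_succ (fun j : ℕ => χ (i + (j : ZMod (x+y)))) t
    simp only [Nat.cast_zero, add_zero] at h2
    have hSi : S i = ∑ j ∈ Finset.range t, χ (i + (j : ZMod (x+y))) := by rw [hSdef]
    omega
  have hcard : Fintype.card (ZMod (x + y)) = x + y := ZMod.card (x + y)
  have htot : ∑ i : ZMod (x + y), S i = x + y := by
    rw [hSdef]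
    dsimp only
    rw [Finset.sum_comm]
    have hcol : ∀ j : ℕ, ∑ i : ZMod (x+y), χ (i + (j : ZMod (x+y))) = x := by
      intro j
      exact (Fintype.sum_equiv (Equiv.addRight ((j : ZMod (x+y)))) _ _ (fun i => rfl)).trans hsum
    rw [Finset.sum_congr rfl (fun j _ => hcol j), Finset.sum_const, Finset.card_range,
      smul_eq_mul, hkt]
    ring
  by_cases hconst : ∀ i j : ZMod (x + y), S i = S j
  · -- S constant: f is periodic with period t, shift the unique pair by t
    have hper : ∀ i : ZMod (x + y), f (i + (t : ZMod (x+y))) = f i := by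
      intro i
      apply hfχ
      have h1 := hrec i
      have h2 := hconst (i + 1) i
      omega
    obtain ⟨⟨i₁, i₂, s⟩, hP, hU⟩ := htv
    simp only at hP hU
    have hP2 : EssPair m f (i₁ + (t : ZMod (x+y))) (i₂ + (t : ZMod (x+y))) s := by
      obtain ⟨a1, a2, a3, a4, a5, a6, a7⟩ := hP
      refine ⟨a1, a2, ?_, ?_, ?_, ?_, ?_⟩
      · rw [hper]; exact a3
      · rw [add_right_comm, hper]; exact a4
      · rw [hper]; exact a5
      · rw [add_right_comm, hper]; exact a6
      · intro j hj1 hj2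
        rw [add_right_comm i₁, add_right_comm i₂, hper, hper]
        exact a7 j hj1 hj2
    have heq := hU ⟨i₁ + (t : ZMod (x+y)), i₂ + (t : ZMod (x+y)), s⟩ hP2
    have h1 : i₁ + (t : ZMod (x+y)) = i₁ := by
      have := congrArg Prod.fst heq
      simpa using this
    have h2 : (t : ZMod (x+y)) = 0 := by
      have := h1
      rwa [add_eq_left] at this
    have h3 : (x + y) ∣ t := (ZMod.natCast_eq_zero_iff t (x+y)).mp h2
    have h4 : x + y ≤ t := Nat.le_of_dvd (by omega) h3
    omega
  · -- S not constant
    push_neg at hconst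
    obtain ⟨i0, j0, hij⟩ := hconst
    obtain ⟨a, -, ha⟩ := Finset.exists_max_image (Finset.univ : Finset (ZMod (x+y))) S
      ⟨i0, Finset.mem_univ _⟩
    obtain ⟨b, -, hb⟩ := Finset.exists_min_image (Finset.univ : Finset (ZMod (x+y))) S
      ⟨i0, Finset.mem_univ _⟩
    have ha' : ∀ i, S i ≤ S a := fun i => ha i (Finset.mem_univ i)
    have hb' : ∀ i, S b ≤ S i := fun i => hb i (Finset.mem_univ i)
    have hba : S b < S a := by
      rcases Nat.lt_or_ge (S b) (S a) with h | h
      · exact h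
      · exfalso; apply hij
        have h1 := ha' i0; have h2 := ha' j0
        have h3 := hb' i0; have h4 := hb' j0
        omega
    -- the gap is at least 2
    have hgap : S b + 2 ≤ S a := by
      by_contra hcon
      have hab : S a = S b + 1 := by omega
      have h1 : ∑ i ∈ Finset.univ.erase a, S i + S a = ∑ i : ZMod (x+y), S i :=
        Finset.sum_erase_add _ _ (Finset.mem_univ a)
      have h2 : (Finset.univ.erase a).card • S b ≤ ∑ i ∈ Finset.univ.erase a, S i :=
        Finset.card_nsmul_le_sum _ _ _ (fun i _ => hb' i)
      have h3 : ∑ i ∈ Finset.univ.erase b, S i + S b = ∑ i : ZMod (x+y), S i :=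
        Finset.sum_erase_add _ _ (Finset.mem_univ b)
      have h4 : ∑ i ∈ Finset.univ.erase b, S i ≤ (Finset.univ.erase b).card • (S b + 1) :=
        Finset.sum_le_card_nsmul _ _ _ (fun i _ => by have := ha' i; omega)
      have hce : (Finset.univ.erase a).card = x + y - 1 := by
        rw [Finset.card_erase_of_mem (Finset.mem_univ a), Finset.card_univ, hcard]
      have hce' : (Finset.univ.erase b).card = x + y - 1 := by
        rw [Finset.card_erase_of_mem (Finset.mem_univ b), Finset.card_univ, hcard]
      rw [hce] at h2
      rw [hce'] at h4
      simp only [smul_eq_mul] at h2 h4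
      rcases Nat.eq_zero_or_pos (S b) with h0 | h0
      · rw [h0] at h4
        simp only [zero_add, mul_one] at h4
        omega
      · have h5 : x + y - 1 ≤ (x + y - 1) * S b := Nat.le_mul_of_pos_right _ h0
        omega
    -- the ℕ-indexed walk and its steps
    have hTd : ∀ n : ℕ, (S ((n+1 : ℕ) : ZMod (x+y)) : ℤ) =
        (S ((n : ℕ) : ZMod (x+y)) : ℤ) +
        ((χ (((n : ℕ) : ZMod (x+y)) + (t : ZMod (x+y))) : ℤ) -
          (χ ((n : ℕ) : ZMod (x+y)) : ℤ)) := by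
      intro n
      have h1 := hrec ((n : ZMod (x+y)))
      have hc : ((n+1 : ℕ) : ZMod (x+y)) = ((n : ℕ) : ZMod (x+y)) + 1 := by push_cast; ring
      rw [hc]
      omega
    have hdb : ∀ n : ℕ,
        (-1 : ℤ) ≤ (χ (((n : ℕ) : ZMod (x+y)) + (t : ZMod (x+y))) : ℤ) -
          (χ ((n : ℕ) : ZMod (x+y)) : ℤ) ∧
        (χ (((n : ℕ) : ZMod (x+y)) + (t : ZMod (x+y))) : ℤ) -
          (χ ((n : ℕ) : ZMod (x+y)) : ℤ) ≤ 1 := by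
      intro n
      have h1 := hχle (((n : ℕ) : ZMod (x+y)) + (t : ZMod (x+y)))
      have h2 := hχle ((n : ℕ) : ZMod (x+y))
      omega
    have hvala : ((ZMod.val a : ℕ) : ZMod (x+y)) = a := ZMod.natCast_zmod_val a
    have hvalb : ((ZMod.val b : ℕ) : ZMod (x+y)) = b := ZMod.natCast_zmod_val b
    -- descent : gives essential pair with shift +t
    obtain ⟨n₁, hn₁1, hn₁2, hn₁3⟩ : ∃ n₁ : ℕ, ZMod.val a < n₁ ∧ n₁ ≤ ZMod.val a + (x+y) ∧
        ((n₁ : ℕ) : ZMod (x+y)) = b := by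
      by_cases hc : ZMod.val a < ZMod.val b
      · exact ⟨ZMod.val b, hc, by have := ZMod.val_lt b; omega, hvalb⟩
      · refine ⟨ZMod.val b + (x+y), by have := ZMod.val_lt a; omega, by omega, ?_⟩
        rw [Nat.cast_add, ZMod.natCast_self, add_zero, hvalb]
    obtain ⟨p, u, hp0, hu1, hpu, hdp, hdpu, hdmid⟩ :=
      extract_dpd (fun n => (S ((n : ℕ) : ZMod (x+y)) : ℤ))
        (fun n => (χ (((n : ℕ) : ZMod (x+y)) + (t : ZMod (x+y))) : ℤ) -
          (χ ((n : ℕ) : ZMod (x+y)) : ℤ))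
        hTd hdb (ZMod.val a) n₁ hn₁1
        (fun n => by rw [hvala]; exact_mod_cast ha' _)
        (by rw [hvala, hn₁3]
            have := hgap; push_cast; omega)
    have hχp : χ ((p : ZMod (x+y))) = 1 ∧ χ ((p : ZMod (x+y)) + (t : ZMod (x+y))) = 0 := by
      have h1 := hχle ((p : ZMod (x+y)) + (t : ZMod (x+y)))
      have h2 := hχle ((p : ZMod (x+y)))
      omega
    have hχpu : χ (((p + u : ℕ) : ZMod (x+y))) = 1 ∧
        χ (((p + u : ℕ) : ZMod (x+y)) + (t : ZMod (x+y))) = 0 := by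
      have h1 := hχle (((p + u : ℕ) : ZMod (x+y)) + (t : ZMod (x+y)))
      have h2 := hχle (((p + u : ℕ) : ZMod (x+y)))
      omega
    have hQp : EssPair m f ((p : ZMod (x+y))) ((p : ZMod (x+y)) + (t : ZMod (x+y))) (u + 1) := by
      have hsu : (u + 1 - 1 : ℕ) = u := by omega
      refine ⟨by omega, by omega, hχ1 _ hχp.1, ?_, hχ0 _ hχp.2, ?_, ?_⟩
      · rw [hsu]
        have e : (p : ZMod (x+y)) + (u : ZMod (x+y)) = ((p + u : ℕ) : ZMod (x+y)) := by
          push_cast; ring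
        rw [e]
        exact hχ1 _ hχpu.1
      · rw [hsu]
        have e : ((p : ZMod (x+y)) + (t : ZMod (x+y))) + (u : ZMod (x+y)) =
            ((p + u : ℕ) : ZMod (x+y)) + (t : ZMod (x+y)) := by push_cast; ring
        rw [e]
        exact hχ0 _ hχpu.2
      · intro j hj1 hj2
        have hd0 := hdmid j hj1 (by omega)
        have e1 : (p : ZMod (x+y)) + (j : ZMod (x+y)) = ((p + j : ℕ) : ZMod (x+y)) := by
          push_cast; ring
        have e2 : ((p : ZMod (x+y)) + (t : ZMod (x+y))) + (j : ZMod (x+y)) =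
            ((p + j : ℕ) : ZMod (x+y)) + (t : ZMod (x+y)) := by push_cast; ring
        rw [e1, e2]
        apply hfχ
        omega
    -- ascent : gives essential pair with shift -t
    obtain ⟨n₁', hn₁1', hn₁2', hn₁3'⟩ : ∃ n₁ : ℕ, ZMod.val b < n₁ ∧ n₁ ≤ ZMod.val b + (x+y) ∧
        ((n₁ : ℕ) : ZMod (x+y)) = a := by
      by_cases hc : ZMod.val b < ZMod.val a
      · exact ⟨ZMod.val a, hc, by have := ZMod.val_lt a; omega, hvala⟩
      · refine ⟨ZMod.val a + (x+y), by have := ZMod.val_lt b; omega, by omega, ?_⟩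
        rw [Nat.cast_add, ZMod.natCast_self, add_zero, hvala]
    obtain ⟨p₂, u₂, hp0', hu1', hpu', hdp', hdpu', hdmid'⟩ :=
      extract_dpd (fun n => -(S ((n : ℕ) : ZMod (x+y)) : ℤ))
        (fun n => -((χ (((n : ℕ) : ZMod (x+y)) + (t : ZMod (x+y))) : ℤ) -
          (χ ((n : ℕ) : ZMod (x+y)) : ℤ)))
        (fun n => by have := hTd n; omega)
        (fun n => by have := hdb n; omega)
        (ZMod.val b) n₁' hn₁1'
        (fun n => by rw [hvalb]; have := hb' ((n : ZMod (x+y))); omega)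
        (by rw [hvalb, hn₁3']
            have := hgap; push_cast; omega)
    have hχp' : χ ((p₂ : ZMod (x+y))) = 0 ∧ χ ((p₂ : ZMod (x+y)) + (t : ZMod (x+y))) = 1 := by
      have h1 := hχle ((p₂ : ZMod (x+y)) + (t : ZMod (x+y)))
      have h2 := hχle ((p₂ : ZMod (x+y)))
      omega
    have hχpu' : χ (((p₂ + u₂ : ℕ) : ZMod (x+y))) = 0 ∧
        χ (((p₂ + u₂ : ℕ) : ZMod (x+y)) + (t : ZMod (x+y))) = 1 := by
      have h1 := hχle (((p₂ + u₂ : ℕ) : ZMod (x+y)) + (t : ZMod (x+y)))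
      have h2 := hχle (((p₂ + u₂ : ℕ) : ZMod (x+y)))
      omega
    have hQm : EssPair m f ((p₂ : ZMod (x+y)) + (t : ZMod (x+y))) ((p₂ : ZMod (x+y))) (u₂ + 1) := by
      have hsu : (u₂ + 1 - 1 : ℕ) = u₂ := by omega
      refine ⟨by omega, by omega, hχ1 _ hχp'.2, ?_, hχ0 _ hχp'.1, ?_, ?_⟩
      · rw [hsu]
        have e : ((p₂ : ZMod (x+y)) + (t : ZMod (x+y))) + (u₂ : ZMod (x+y)) =
            ((p₂ + u₂ : ℕ) : ZMod (x+y)) + (t : ZMod (x+y)) := by push_cast; ring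
        rw [e]
        exact hχ1 _ hχpu'.2
      · rw [hsu]
        have e : (p₂ : ZMod (x+y)) + (u₂ : ZMod (x+y)) = ((p₂ + u₂ : ℕ) : ZMod (x+y)) := by
          push_cast; ring
        rw [e]
        exact hχ0 _ hχpu'.1
      · intro j hj1 hj2
        have hd0 := hdmid' j hj1 (by omega)
        have e1 : ((p₂ : ZMod (x+y)) + (t : ZMod (x+y))) + (j : ZMod (x+y)) =
            ((p₂ + j : ℕ) : ZMod (x+y)) + (t : ZMod (x+y)) := by push_cast; ring
        have e2 : (p₂ : ZMod (x+y)) + (j : ZMod (x+y)) = ((p₂ + j : ℕ) : ZMod (x+y)) := by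
          push_cast; ring
        rw [e1, e2]
        apply hfχ
        omega
    -- uniqueness forces the two pairs to coincide, giving t + t = 0 in ZMod (x+y)
    obtain ⟨P, hP, hU⟩ := htv
    have e1 := hU ⟨(p : ZMod (x+y)), (p : ZMod (x+y)) + (t : ZMod (x+y)), u + 1⟩ hQp
    have e2 := hU ⟨(p₂ : ZMod (x+y)) + (t : ZMod (x+y)), (p₂ : ZMod (x+y)), u₂ + 1⟩ hQm
    have e3 := e1.trans e2.symm
    have c1 : (p : ZMod (x+y)) = (p₂ : ZMod (x+y)) + (t : ZMod (x+y)) := by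
      have := congrArg Prod.fst e3; simpa using this
    have c2 : (p : ZMod (x+y)) + (t : ZMod (x+y)) = (p₂ : ZMod (x+y)) := by
      have := congrArg (fun z : ZMod (x+y) × ZMod (x+y) × ℕ => z.2.1) e3; simpa using this
    have c3 : (p₂ : ZMod (x+y)) + ((t : ZMod (x+y)) + (t : ZMod (x+y))) =
        (p₂ : ZMod (x+y)) + 0 := by
      rw [add_zero, ← add_assoc, ← c1, c2]
    have c4 : ((2 * t : ℕ) : ZMod (x+y)) = 0 := by
      rw [two_mul, Nat.cast_add]
      exact add_left_cancel c3
    have c5 : (x + y) ∣ 2 * t := (ZMod.natCast_eq_zero_iff _ _).mp c4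
    have c6 : x + y ≤ 2 * t := Nat.le_of_dvd (by omega) c5
    omega
end
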